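/- arXiv:0906.1832 — 9 statements merged into one kernel-verified Lean document; each statement's English description precedes it below -/
import Mathlib

section
/- Let n ≥ 1, let I = {i_1 < i_2 < … < i_l} be a subset of {1,…,n−1}, and set i_0 := 0 and i_{l+1} := n. Then for every natural number q, (∑_{w ∈ S_n with Des(w) ⊆ I} q^{inv(w)}) · ∏_{k=1}^{l+1} ∏_{j=1}^{i_k − i_{k−1}} (q^j − 1) = ∏_{j=1}^{n} (q^j − 1), as an identity of integers. (Equivalently, the sum ∑_{w ∈ S_n, Des(w) ⊆ I} q^{ℓ(w)} equals the Gaussian multinomial coefficient binom(n, I)_q.) -/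
open Finset

/-- The value of the permutation `w` of `{0, …, n-1}` at a natural number `i`,
extended by the identity outside the range. -/
def permVal {n : ℕ} (w : Equiv.Perm (Fin n)) (i : ℕ) : ℕ :=
  if h : i < n then (w ⟨i, h⟩ : ℕ) else i

/-- The inversion number (Coxeter length) of a permutation of `{0, …, n-1}`:
the number of pairs `a < b` with `w a > w b`. -/
def invNum {n : ℕ} (w : Equiv.Perm (Fin n)) : ℕ :=
  (Finset.univ.filter fun q : Fin n × Fin n => q.1 < q.2 ∧ w q.2 < w q.1).card

/-- The descent set of a permutation, in the `1`-indexed convention of the paper: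
`Des(w) = {i ∈ {1,…,n-1} : w(i) > w(i+1)}`, where positions `1,…,n` of the paper
correspond to the indices `0,…,n-1` of `Fin n`. -/
def descSet {n : ℕ} (w : Equiv.Perm (Fin n)) : Finset ℕ :=
  (Finset.Icc 1 (n - 1)).filter fun i => permVal w i < permVal w (i - 1)

/-- `∏_{j=1}^{m} (q^j - 1)`. -/
def qFactProd (q m : ℕ) : ℤ :=
  ∏ j ∈ Finset.Icc 1 m, ((q : ℤ) ^ j - 1)

/-- Given `I = {i_1 < … < i_l} ⊆ {1,…,n-1}`, with `i_0 := 0` and `i_{l+1} := n`, this is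
`∏_{k=1}^{l+1} ∏_{j=1}^{i_k - i_{k-1}} (q^j - 1)`, the denominator of the Gaussian
multinomial coefficient `binom(n, I)_q` with denominators cleared. -/
def gaussDen (q n : ℕ) (I : Finset ℕ) : ℤ :=
  let js : List ℕ := (insert n I).sort (· ≤ ·)
  ((js.zip (0 :: js)).map fun ab => qFactProd q (ab.1 - ab.2)).prod

/-!
Let `m = max I`. A permutation `w` with `Des(w) ⊆ I` has no descent after position `m`, so it is
determined by the set `S` of its first `m` values together with the permutation `v ∈ S_m` recording
their relative order, and `Des(v) ⊆ I \ {m}`; conversely every such pair `(S, v)` arises. Moreover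
`inv(w) = inv(v) + #{(x, y) : x ∈ S, y ∉ S, y < x}`, and summing `q` to these cross inversions over
all `m`-subsets `S` gives the Gaussian binomial `binom(n, m)_q`, by the q-Pascal recursion obtained
from removing the largest element. Removing `m` from `I` splits off the last block
`∏_{j ≤ n - m} (q^j - 1)` of the denominator, so induction on `I` concludes.
-/

lemma Finset.sort_insert_of_forall_lt {α : Type*} [LinearOrder α] {s : Finset α} {a : α}
    (h : ∀ x ∈ s, x < a) : (insert a s).sort (· ≤ ·) = s.sort (· ≤ ·) ++ [a] := by
  have hl : (s.sort (· ≤ ·) ++ [a]).Nodup :=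
    List.nodup_append.mpr ⟨sort_nodup _ _, List.nodup_singleton a, by
      simp only [mem_sort, List.mem_singleton]
      rintro x hx _ rfl
      exact (h x hx).ne⟩
  have hsorted : (s.sort (· ≤ ·) ++ [a]).Pairwise (· ≤ ·) :=
    List.pairwise_append.mpr ⟨pairwise_sort _ _, List.pairwise_singleton _ a, by
      simp only [mem_sort, List.mem_singleton]
      rintro x hx _ rfl
      exact (h x hx).le⟩
  have hset : (s.sort (· ≤ ·) ++ [a]).toFinset = insert a s := by
    ext x
    simp
  rw [← hset]
  exact (List.toFinset_sort (· ≤ ·) hl).mpr hsorted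

lemma List.zip_append_singleton_cons {α : Type*} (L : List α) (a c : α) :
    (L ++ [a]).zip (c :: (L ++ [a])) = L.zip (c :: L) ++ [(a, L.getLastD c)] := by
  induction L generalizing c with
  | nil => rfl
  | cons x xs ih => simp only [cons_append, zip_cons_cons, ih x, getLastD_cons]

lemma Finset.sum_orderEmbOfFin {α M : Type*} [LinearOrder α] [AddCommMonoid M] (s : Finset α)
    {j : ℕ} (h : s.card = j) (f : α → M) : ∑ i, f (s.orderEmbOfFin h i) = ∑ x ∈ s, f x := by
  calc ∑ i, f (s.orderEmbOfFin h i) = ∑ x ∈ univ.map (s.orderEmbOfFin h).toEmbedding, f x :=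
        (sum_map _ _ _).symm
    _ = ∑ x ∈ s, f x := by rw [map_orderEmbOfFin_univ]

lemma Fin.castAdd_lt_natAdd {m k : ℕ} (a : Fin m) (b : Fin k) : castAdd k a < natAdd m b :=
  Fin.lt_def.mpr (by simp only [val_castAdd, val_natAdd]; omega)

lemma qFactProd_succ (q m : ℕ) :
    qFactProd q (m + 1) = qFactProd q m * ((q : ℤ) ^ (m + 1) - 1) :=
  prod_Icc_succ_top (by omega) _

lemma gaussDen_empty (q n : ℕ) : gaussDen q n ∅ = qFactProd q n := by
  simp [gaussDen]

lemma gaussDen_insert_add {q m k : ℕ} {J : Finset ℕ} (hJ : ∀ x ∈ J, x < m) (hk : 0 < k) :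
    gaussDen q (m + k) (insert m J) = gaussDen q m J * qFactProd q k := by
  have hsort : (insert m J).sort (· ≤ ·) = J.sort (· ≤ ·) ++ [m] := sort_insert_of_forall_lt hJ
  have hsort' :
      (insert (m + k) (insert m J)).sort (· ≤ ·) = (insert m J).sort (· ≤ ·) ++ [m + k] :=
    sort_insert_of_forall_lt fun x hx => by
      rcases mem_insert.mp hx with rfl | hx
      · omega
      · exact (hJ x hx).trans (by omega)
  have hlast : ((insert m J).sort (· ≤ ·)).getLastD 0 = m := by simp [hsort]
  simp only [gaussDen, hsort', List.zip_append_singleton_cons, hlast, List.map_append,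
    List.prod_append, List.map_cons, List.map_nil, List.prod_cons, List.prod_nil, mul_one,
    Nat.add_sub_cancel_left]

section CrossInversions

variable {α : Type*} [LinearOrder α] {U T : Finset α} {a : α}

def crossInvNum (U T : Finset α) : ℕ :=
  ∑ x ∈ T, ((U \ T).filter (· < x)).card

lemma crossInvNum_insert_of_forall_lt (ha : ∀ x ∈ U, x < a) (hT : T ⊆ U) :
    crossInvNum (insert a U) T = crossInvNum U T := by
  have haT : a ∉ T := fun h => (ha a (hT h)).false
  refine sum_congr rfl fun x hx => ?_
  rw [insert_sdiff_of_notMem _ haT, filter_insert, if_neg (ha x (hT hx)).not_gt]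

lemma crossInvNum_insert_insert (ha : ∀ x ∈ U, x < a) (hT : T ⊆ U) :
    crossInvNum (insert a U) (insert a T) = crossInvNum U T + (U.card - T.card) := by
  have haU : a ∉ U := fun h => (ha a h).false
  have hsdiff : insert a U \ insert a T = U \ T := by
    rw [insert_sdiff_insert, sdiff_insert_of_notMem haU]
  rw [crossInvNum, sum_insert (fun h => haU (hT h)), hsdiff, add_comm,
    filter_true_of_mem fun y hy => ha y (mem_sdiff.mp hy).1, card_sdiff_of_subset hT]
  rfl

variable {R : Type*} [CommSemiring R]

def qBinom (x : R) (U : Finset α) (m : ℕ) : R :=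
  ∑ T ∈ U.powersetCard m, x ^ crossInvNum U T

lemma qBinom_zero (x : R) (U : Finset α) : qBinom x U 0 = 1 := by
  simp [qBinom, crossInvNum]

lemma qBinom_eq_zero_of_card_lt (x : R) {m : ℕ} (h : U.card < m) : qBinom x U m = 0 := by
  rw [qBinom, powersetCard_eq_empty.mpr h, sum_empty]

lemma qBinom_insert_succ (x : R) (ha : ∀ y ∈ U, y < a) (m : ℕ) :
    qBinom x (insert a U) (m + 1) = qBinom x U (m + 1) + x ^ (U.card - m) * qBinom x U m := by
  have haU : a ∉ U := fun h => (ha a h).false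
  have hnotMem : ∀ V ∈ U.powersetCard m, a ∉ V := fun V hV h =>
    haU ((mem_powersetCard.mp hV).1 h)
  rw [qBinom, powersetCard_succ_insert haU, sum_union, sum_image]
  · congr 1
    · exact sum_congr rfl fun T hT =>
        by rw [crossInvNum_insert_of_forall_lt ha (mem_powersetCard.mp hT).1]
    · rw [qBinom, mul_sum]
      refine sum_congr rfl fun T hT => ?_
      obtain ⟨hTU, hTcard⟩ := mem_powersetCard.mp hT
      rw [crossInvNum_insert_insert ha hTU, hTcard, pow_add, mul_comm]
  · intro S hS T hT hST
    rw [← erase_insert (hnotMem S hS), ← erase_insert (hnotMem T hT), hST]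
  · refine disjoint_left.mpr fun S hS hS' => ?_
    obtain ⟨T, -, rfl⟩ := mem_image.mp hS'
    exact haU ((mem_powersetCard.mp hS).1 (mem_insert_self a T))

lemma qBinom_mul_qFactProd_mul_qFactProd (q : ℕ) {U : Finset α} {m k : ℕ}
    (hU : U.card = m + k) :
    qBinom (q : ℤ) U m * qFactProd q m * qFactProd q k = qFactProd q (m + k) := by
  induction U using Finset.induction_on_max generalizing m k with
  | empty =>
    obtain ⟨rfl, rfl⟩ : m = 0 ∧ k = 0 := by simp at hU; omega
    simp [qBinom_zero, qFactProd]
  | insert a U ha ih =>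
    rw [card_insert_of_notMem fun h => (ha a h).false] at hU
    rcases m with _ | m
    · simp [qBinom_zero, qFactProd]
    have h0 := ih (m := m) (k := k) (by omega)
    rcases k with _ | k
    · rw [qBinom_insert_succ _ ha, qBinom_eq_zero_of_card_lt _ (by omega),
        show U.card - m = 0 by omega]
      simp only [zero_add, pow_zero, one_mul, qFactProd_succ q m, add_zero] at h0 ⊢
      linear_combination ((q : ℤ) ^ (m + 1) - 1) * h0
    have h1 := ih (m := m + 1) (k := k) (by omega)
    rw [qBinom_insert_succ _ ha, show U.card - m = k + 1 by omega]
    rw [show m + 1 + k = m + (k + 1) by omega, qFactProd_succ q m] at h1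
    rw [qFactProd_succ q k] at h0
    rw [show m + 1 + (k + 1) = m + (k + 1) + 1 by omega, qFactProd_succ q (m + (k + 1)),
      qFactProd_succ q m, qFactProd_succ q k]
    linear_combination
      ((q : ℤ) ^ (k + 1) - 1) * h1 + (q : ℤ) ^ (k + 1) * ((q : ℤ) ^ (m + 1) - 1) * h0

end CrossInversions

section Descents

variable {n : ℕ}

lemma mem_descSet_iff {w : Equiv.Perm (Fin n)} {i : ℕ} :
    i ∈ descSet w ↔ ∃ a b : Fin n, (b : ℕ) = a + 1 ∧ i = b ∧ w b < w a := by
  simp only [descSet, mem_filter, mem_Icc]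
  constructor
  · rintro ⟨⟨h1, h2⟩, hlt⟩
    refine ⟨⟨i - 1, by omega⟩, ⟨i, by omega⟩, by simp; omega, rfl, ?_⟩
    simpa [permVal, show i < n by omega, show i - 1 < n by omega] using hlt
  · rintro ⟨a, b, hab, rfl, hlt⟩
    refine ⟨⟨by omega, by omega⟩, ?_⟩
    have ha : (b : ℕ) - 1 = a := by omega
    simpa [permVal, ha] using hlt

lemma lt_of_mem_descSet {w : Equiv.Perm (Fin n)} {i : ℕ} (hi : i ∈ descSet w) : i < n := by
  have := (mem_filter.mp hi).1
  rw [mem_Icc] at this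
  omega

lemma apply_lt_apply_of_descSet_le {w : Equiv.Perm (Fin n)} {m : ℕ}
    (hw : ∀ i ∈ descSet w, i ≤ m) {a b : Fin n} (ha : m ≤ a) (hab : a < b) : w a < w b := by
  obtain ⟨b, hb⟩ := b
  induction b with
  | zero => exact absurd (Fin.lt_def.mp hab) (Nat.not_lt_zero _)
  | succ b ih =>
    have hstep : w ⟨b, by omega⟩ < w ⟨b + 1, hb⟩ := by
      have hnot : ¬ w ⟨b + 1, hb⟩ < w ⟨b, by omega⟩ := fun h => by
        have := hw _ (mem_descSet_iff.mpr ⟨_, _, rfl, rfl, h⟩)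
        have : (a : ℕ) < b + 1 := hab
        omega
      exact lt_of_le_of_ne (not_lt.mp hnot) (w.injective.ne (by simp [Fin.ext_iff]))
    rcases Nat.lt_succ_iff_lt_or_eq.mp (Fin.lt_def.mp hab) with h | h
    · exact (ih (by omega) h).trans hstep
    · rwa [show a = ⟨b, by omega⟩ from Fin.ext h]

lemma eq_one_of_descSet_eq_empty {w : Equiv.Perm (Fin n)} (hw : descSet w = ∅) : w = 1 :=
  Equiv.ext fun _ => StrictMono.apply_eq fun _ _ =>
    apply_lt_apply_of_descSet_le (m := 0) (by simp [hw]) (Nat.zero_le _)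

lemma descSet_one : descSet (1 : Equiv.Perm (Fin n)) = ∅ := by
  ext i
  simp only [mem_descSet_iff, Equiv.Perm.one_apply, Fin.lt_def, notMem_empty, iff_false]
  omega

lemma invNum_one : invNum (1 : Equiv.Perm (Fin n)) = 0 := by
  rw [invNum, card_eq_zero, filter_eq_empty_iff]
  exact fun p _ h => lt_asymm h.1 h.2

lemma invNum_eq_sum_sum (w : Equiv.Perm (Fin n)) :
    invNum w = ∑ a, ∑ b, if a < b ∧ w b < w a then 1 else 0 := by
  rw [invNum, card_filter, Fintype.sum_prod_type]

end Descents

section BlockPerm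

variable {m k : ℕ} {S : Finset (Fin (m + k))}

lemma card_compl_eq_of_card_eq (hS : S.card = m) : Sᶜ.card = k := by
  rw [card_compl, hS, Fintype.card_fin, Nat.add_sub_cancel_left]

noncomputable def blockPerm (S : Finset (Fin (m + k))) (hS : S.card = m)
    (v : Equiv.Perm (Fin m)) : Equiv.Perm (Fin (m + k)) :=
  Equiv.ofBijective
    (Fin.append (S.orderEmbOfFin hS ∘ v) (Sᶜ.orderEmbOfFin (card_compl_eq_of_card_eq hS)))
    (Finite.injective_iff_bijective.mp <| Fin.append_injective_iff.mpr
      ⟨(S.orderEmbOfFin hS).injective.comp v.injective, (Sᶜ.orderEmbOfFin _).injective,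
        fun a b h => mem_compl.mp (Sᶜ.orderEmbOfFin_mem _ b) <| by
          rw [← h]; exact S.orderEmbOfFin_mem hS (v a)⟩)

variable (hS : S.card = m) (v : Equiv.Perm (Fin m))

@[simp]
lemma blockPerm_castAdd (a : Fin m) :
    blockPerm S hS v (Fin.castAdd k a) = S.orderEmbOfFin hS (v a) := by
  simp [blockPerm]

@[simp]
lemma blockPerm_natAdd (b : Fin k) :
    blockPerm S hS v (Fin.natAdd m b) = Sᶜ.orderEmbOfFin (card_compl_eq_of_card_eq hS) b := by
  simp [blockPerm]

lemma blockPerm_apply_mem_iff (j : Fin (m + k)) : blockPerm S hS v j ∈ S ↔ (j : ℕ) < m := by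
  induction j using Fin.addCases with
  | left a => simp [S.orderEmbOfFin_mem hS]
  | right b => simpa using mem_compl.mp (Sᶜ.orderEmbOfFin_mem _ b)

lemma invNum_blockPerm : invNum (blockPerm S hS v) = invNum v + crossInvNum univ S := by
  have hcross : crossInvNum univ S =
      ∑ a, ∑ b, if Sᶜ.orderEmbOfFin (card_compl_eq_of_card_eq hS) b < S.orderEmbOfFin hS (v a)
        then 1 else 0 := by
    rw [Equiv.sum_comp v fun a => ∑ b, if Sᶜ.orderEmbOfFin _ b < S.orderEmbOfFin hS a then 1 else 0,
      sum_orderEmbOfFin S hS fun x => ∑ b, if Sᶜ.orderEmbOfFin _ b < x then 1 else 0]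
    refine sum_congr rfl fun x _ => ?_
    rw [← compl_eq_univ_sdiff, card_filter,
      sum_orderEmbOfFin Sᶜ _ fun y => if y < x then 1 else 0]
  set w := blockPerm S hS v
  have hleft : ∀ a a' : Fin m, (Fin.castAdd k a < Fin.castAdd k a' ∧
      w (Fin.castAdd k a') < w (Fin.castAdd k a)) ↔ (a < a' ∧ v a' < v a) := by
    simp [w, (Fin.strictMono_castAdd k).lt_iff_lt]
  have hcrossing : ∀ a b, (Fin.castAdd k a < Fin.natAdd m b ∧
      w (Fin.natAdd m b) < w (Fin.castAdd k a)) ↔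
        Sᶜ.orderEmbOfFin (card_compl_eq_of_card_eq hS) b < S.orderEmbOfFin hS (v a) := by
    simp [w, Fin.castAdd_lt_natAdd]
  have hback : ∀ b a, ¬ (Fin.natAdd m b < Fin.castAdd k a ∧
      w (Fin.castAdd k a) < w (Fin.natAdd m b)) :=
    fun b a h => (Fin.castAdd_lt_natAdd a b).not_gt h.1
  have hright : ∀ b b', ¬ (Fin.natAdd m b < Fin.natAdd m b' ∧
      w (Fin.natAdd m b') < w (Fin.natAdd m b)) := by
    simpa [w] using fun b b' h => h.le
  simp only [invNum_eq_sum_sum, Fin.sum_univ_add, hleft, hcrossing, hback, hright, hcross,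
    if_false, sum_const_zero, add_zero, sum_add_distrib]

lemma descSet_subset_descSet_blockPerm : descSet v ⊆ descSet (blockPerm S hS v) := by
  intro i hi
  obtain ⟨a, b, hab, rfl, hlt⟩ := mem_descSet_iff.mp hi
  exact mem_descSet_iff.mpr
    ⟨Fin.castAdd k a, Fin.castAdd k b, by simpa using hab, rfl, by simpa using hlt⟩

lemma descSet_blockPerm_subset : descSet (blockPerm S hS v) ⊆ insert m (descSet v) := by
  intro i hi
  obtain ⟨a, b, hab, rfl, hlt⟩ := mem_descSet_iff.mp hi
  induction a using Fin.addCases with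
  | left a =>
    induction b using Fin.addCases with
    | left b =>
      exact mem_insert_of_mem <|
        mem_descSet_iff.mpr ⟨a, b, by simpa using hab, rfl, by simpa using hlt⟩
    | right b =>
      simp only [Fin.val_castAdd, Fin.val_natAdd] at hab
      exact mem_insert.mpr (Or.inl (by simp only [Fin.val_natAdd]; omega))
  | right a =>
    induction b using Fin.addCases with
    | left b => simp only [Fin.val_castAdd, Fin.val_natAdd] at hab; omega
    | right b =>
      simp only [Fin.val_natAdd] at hab
      simp only [blockPerm_natAdd, OrderEmbedding.lt_iff_lt, Fin.lt_def] at hlt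
      omega

lemma descSet_blockPerm_subset_insert_iff {J : Finset ℕ} :
    descSet (blockPerm S hS v) ⊆ insert m J ↔ descSet v ⊆ J :=
  ⟨fun h _ hi => (mem_insert.mp (h (descSet_subset_descSet_blockPerm hS v hi))).resolve_left
      (lt_of_mem_descSet hi).ne,
    fun h => (descSet_blockPerm_subset hS v).trans (insert_subset_insert m h)⟩

lemma eq_and_eq_of_blockPerm_eq {S' : Finset (Fin (m + k))} {hS' : S'.card = m}
    {v' : Equiv.Perm (Fin m)} (h : blockPerm S hS v = blockPerm S' hS' v') :
    S = S' ∧ v = v' := by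
  have hmem (T : Finset (Fin (m + k))) (hT : T.card = m) (u : Equiv.Perm (Fin m)) (x) :
      x ∈ T ↔ ((blockPerm T hT u).symm x : ℕ) < m := by
    simpa using blockPerm_apply_mem_iff hT u ((blockPerm T hT u).symm x)
  obtain rfl : S = S' := by
    ext x
    rw [hmem S hS v, hmem S' hS' v', h]
  refine ⟨rfl, Equiv.ext fun a => (S.orderEmbOfFin hS).injective ?_⟩
  simpa using congrArg (· (Fin.castAdd k a)) h

lemma exists_blockPerm_eq (w : Equiv.Perm (Fin (m + k))) (hw : ∀ i ∈ descSet w, i ≤ m) :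
    ∃ (S : Finset (Fin (m + k))) (hS : S.card = m) (v : Equiv.Perm (Fin m)),
      blockPerm S hS v = w := by
  set S := univ.map ((Fin.castAddEmb k).trans w.toEmbedding)
  have hS : S.card = m := by simp [S]
  have hmemS (a : Fin m) : w (Fin.castAdd k a) ∈ S := mem_map_of_mem _ (mem_univ a)
  have hnotMemS (b : Fin k) : w (Fin.natAdd m b) ∈ Sᶜ := mem_compl.mpr fun h => by
    obtain ⟨a, -, ha⟩ := mem_map.mp h
    exact (Fin.castAdd_lt_natAdd a b).ne (w.injective ha)
  let v : Equiv.Perm (Fin m) := Equiv.ofBijective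
    (fun a => (S.orderIsoOfFin hS).symm ⟨w (Fin.castAdd k a), hmemS a⟩)
    (Finite.injective_iff_bijective.mp fun a a' h => by simpa using h)
  have hv (a : Fin m) : S.orderEmbOfFin hS (v a) = w (Fin.castAdd k a) := by
    simp [v, ← coe_orderIsoOfFin_apply]
  have htail : Sᶜ.orderEmbOfFin (card_compl_eq_of_card_eq hS) = w ∘ Fin.natAdd m :=
    (orderEmbOfFin_unique _ hnotMemS fun b b' hbb' =>
      apply_lt_apply_of_descSet_le hw (by simp) ((Fin.strictMono_natAdd m) hbb')).symm
  refine ⟨S, hS, v, Equiv.ext fun j => ?_⟩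
  induction j using Fin.addCases with
  | left a => rw [blockPerm_castAdd, hv]
  | right b => rw [blockPerm_natAdd, htail]; rfl

end BlockPerm

theorem sum_pow_invNum_filter_descSet_subset_insert {R : Type*} [CommSemiring R] (x : R)
    {m k : ℕ} {J : Finset ℕ} (hJ : ∀ i ∈ J, i ≤ m) :
    ∑ w ∈ univ.filter (fun w : Equiv.Perm (Fin (m + k)) => descSet w ⊆ insert m J), x ^ invNum w
      = qBinom x (univ : Finset (Fin (m + k))) m *
          ∑ v ∈ univ.filter (fun v : Equiv.Perm (Fin m) => descSet v ⊆ J), x ^ invNum v := by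
  rw [qBinom, sum_mul_sum, ← sum_product']
  symm
  refine sum_bij (fun p hp => blockPerm p.1 (mem_powersetCard.mp (mem_product.mp hp).1).2 p.2)
    ?_ ?_ ?_ ?_
  · rintro ⟨S, v⟩ hp
    simpa [descSet_blockPerm_subset_insert_iff] using (mem_product.mp hp).2
  · rintro ⟨S, v⟩ hp ⟨S', v'⟩ hp' h
    obtain ⟨rfl, rfl⟩ := eq_and_eq_of_blockPerm_eq _ _ h
    rfl
  · intro w hw
    have hw' := (mem_filter.mp hw).2
    obtain ⟨S, hS, v, rfl⟩ := exists_blockPerm_eq w fun i hi => by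
      rcases mem_insert.mp (hw' hi) with rfl | hi
      exacts [le_rfl, hJ i hi]
    exact ⟨(S, v), by simpa [hS] using (descSet_blockPerm_subset_insert_iff hS v).mp hw', rfl⟩
  · rintro ⟨S, v⟩ hp
    rw [invNum_blockPerm, pow_add, mul_comm]

theorem descent_length_sum_eq_gaussian_multinomial_general
    (n : ℕ) (I : Finset ℕ) (hI : I ⊆ Finset.Icc 1 (n - 1)) (q : ℕ) :
    (∑ w ∈ Finset.univ.filter fun w : Equiv.Perm (Fin n) => descSet w ⊆ I,
        (q : ℤ) ^ invNum w) * gaussDen q n I = qFactProd q n := by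
  induction I using Finset.induction_on_max generalizing n with
  | empty =>
    have hfilter : univ.filter (fun w : Equiv.Perm (Fin n) => descSet w ⊆ ∅) = {1} := by
      ext w
      simpa [subset_empty] using ⟨eq_one_of_descSet_eq_empty, fun h => h ▸ descSet_one⟩
    rw [hfilter, sum_singleton, invNum_one, pow_zero, one_mul, gaussDen_empty]
  | insert m J hJ ih =>
    have hm := mem_Icc.mp (hI (mem_insert_self m J))
    obtain ⟨k, rfl⟩ : ∃ k, n = m + k := ⟨n - m, by omega⟩
    have hJI : J ⊆ Icc 1 (m - 1) := fun i hi => by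
      have := mem_Icc.mp (hI (mem_insert_of_mem hi))
      have := hJ i hi
      exact mem_Icc.mpr (by omega)
    rw [sum_pow_invNum_filter_descSet_subset_insert _ fun i hi => (hJ i hi).le,
      gaussDen_insert_add hJ (by omega),
      ← qBinom_mul_qFactProd_mul_qFactProd q (card_univ.trans (Fintype.card_fin (m + k))),
      ← ih m hJI]
    ring

/-- `∑_{w ∈ S_n, Des(w) ⊆ I} q^{inv(w)} · ∏_{k=1}^{l+1} ∏_{j=1}^{i_k - i_{k-1}} (q^j - 1)
  = ∏_{j=1}^{n} (q^j - 1)`, i.e. the descent-restricted length generating function equals the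
Gaussian multinomial coefficient `binom(n, I)_q`. -/
theorem descent_length_sum_eq_gaussian_multinomial
    (n : ℕ) (hn : 1 ≤ n) (I : Finset ℕ) (hI : I ⊆ Finset.Icc 1 (n - 1)) (q : ℕ) :
    (∑ w ∈ Finset.univ.filter fun w : Equiv.Perm (Fin n) => descSet w ⊆ I,
        (q : ℤ) ^ invNum w) * gaussDen q n I = qFactProd q n :=
  descent_length_sum_eq_gaussian_multinomial_general n I hI q
end

section
/- Let A be a commutative ring, let n ≥ 1, let S := {1,…,n−1}, and let W, W' : 𝒫(S) → A be two families indexed by the subsets of S satisfying the inversion property: for every I ⊆ S, W'(I) = (−1)^{|I|} · ∑_{J ⊆ I} W(J). Then for every I ⊆ S, ∑_{J : I ⊆ J ⊆ S} W'(J) = (−1)^{n−1} · ∑_{J : S∖I ⊆ J ⊆ S} W(J). -/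
/-!
Expanding `W'` and swapping the two sums, `W K` acquires the coefficient
`∑_{I ∪ K ⊆ J ⊆ S} (-1)^|J|`, an alternating sum over a Boolean interval. It vanishes unless
`I ∪ K = S`, i.e. `S ∖ I ⊆ K`, in which case it is `(-1)^|S| = (-1)^(n-1)`.
-/

open Finset

section

universe u v

variable {α : Type u} {A : Type v} [DecidableEq α] [CommRing A]

theorem Finset.sum_powerset_neg_one_pow_card_eq_ite (s : Finset α) :
    ∑ t ∈ s.powerset, (-1 : A) ^ #t = if s = ∅ then 1 else 0 := by
  exact_mod_cast congrArg (Int.cast : ℤ → A) sum_powerset_neg_one_pow_card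

theorem Finset.sum_Icc_neg_one_pow_card {s t : Finset α} (hst : s ⊆ t) :
    ∑ u ∈ Icc s t, (-1 : A) ^ #u = if s = t then (-1) ^ #t else 0 := by
  have hinj : Set.InjOn (s ∪ ·) ((t \ s).powerset : Set (Finset α)) := by
    intro u hu v hv huv
    simp only [coe_powerset, Set.mem_preimage, Set.mem_powerset_iff, coe_subset] at hu hv
    rw [← union_sdiff_cancel_left (disjoint_sdiff.mono_right hu),
      ← union_sdiff_cancel_left (disjoint_sdiff.mono_right hv)]
    exact congrArg (· \ s) huv
  rw [Icc_eq_image_powerset hst, sum_image hinj]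
  calc ∑ u ∈ (t \ s).powerset, (-1 : A) ^ #(s ∪ u)
      = (-1) ^ #s * ∑ u ∈ (t \ s).powerset, (-1 : A) ^ #u := by
        rw [mul_sum]
        refine sum_congr rfl fun u hu => ?_
        rw [card_union_of_disjoint (disjoint_sdiff.mono_right (mem_powerset.mp hu)), pow_add]
    _ = if s = t then (-1) ^ #t else 0 := by
        rw [sum_powerset_neg_one_pow_card_eq_ite]
        by_cases h : s = t
        · simp [h]
        · have hne : t \ s ≠ ∅ := fun he => h (subset_antisymm hst (sdiff_eq_empty_iff_subset.mp he))
          simp [h, hne]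

theorem Finset.sum_Icc_neg_one_pow_card_mul_sum_powerset {s t : Finset α} (hst : s ⊆ t)
    (W : Finset α → A) :
    ∑ u ∈ Icc s t, (-1 : A) ^ #u * ∑ v ∈ u.powerset, W v =
      (-1) ^ #t * ∑ v ∈ Icc (t \ s) t, W v := by
  have hswap : ∀ u v, u ∈ Icc s t ∧ v ∈ Iic u ↔ u ∈ Icc (s ∪ v) t ∧ v ∈ Iic t := by
    intro u v
    simp only [mem_Icc, mem_Iic, union_subset_iff]
    exact ⟨fun ⟨⟨hsu, hut⟩, hvu⟩ => ⟨⟨⟨hsu, hvu⟩, hut⟩, hvu.trans hut⟩,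
      fun ⟨⟨⟨hsu, hvu⟩, hut⟩, _⟩ => ⟨⟨hsu, hut⟩, hvu⟩⟩
  have hcover : ∀ v ⊆ t, s ∪ v = t ↔ t \ s ⊆ v := fun v hvt => by
    rw [show t \ s ⊆ v ↔ t ⊆ s ∪ v from sdiff_le_iff]
    exact ⟨fun h => h.ge, fun h => subset_antisymm (union_subset hst hvt) h⟩
  calc ∑ u ∈ Icc s t, (-1 : A) ^ #u * ∑ v ∈ u.powerset, W v
      = ∑ v ∈ Iic t, ∑ u ∈ Icc (s ∪ v) t, (-1 : A) ^ #u * W v := by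
        simp_rw [mul_sum, ← Iic_eq_powerset]
        exact sum_comm' hswap
    _ = ∑ v ∈ Iic t, if t \ s ⊆ v then (-1) ^ #t * W v else 0 := by
        refine sum_congr rfl fun v hv => ?_
        have hvt : v ⊆ t := mem_Iic.mp hv
        rw [← sum_mul, sum_Icc_neg_one_pow_card (union_subset hst hvt), ite_mul, zero_mul]
        exact if_congr (hcover v hvt) rfl rfl
    _ = (-1) ^ #t * ∑ v ∈ Icc (t \ s) t, W v := by
        rw [← sum_filter, ← mul_sum]
        congr 2
        ext v
        simp [and_comm]

end

theorem inversion_property_sum_over_supersets_general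
    (A : Type*) [CommRing A] (n : ℕ)
    (W W' : Finset ℕ → A)
    (hWW' : ∀ I ⊆ Finset.Icc 1 (n - 1),
      W' I = (-1 : A) ^ I.card * ∑ J ∈ I.powerset, W J) :
    ∀ I ⊆ Finset.Icc 1 (n - 1),
      ∑ J ∈ (Finset.Icc 1 (n - 1)).powerset.filter (fun J => I ⊆ J), W' J =
        (-1 : A) ^ (n - 1) *
          ∑ J ∈ (Finset.Icc 1 (n - 1)).powerset.filter
            (fun J => Finset.Icc 1 (n - 1) \ I ⊆ J), W J := by
  intro I hI
  rw [← Icc_eq_filter_powerset, ← Icc_eq_filter_powerset]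
  calc ∑ J ∈ Icc I (Icc 1 (n - 1)), W' J
      = ∑ J ∈ Icc I (Icc 1 (n - 1)), (-1 : A) ^ #J * ∑ K ∈ J.powerset, W K :=
        sum_congr rfl fun J hJ => hWW' J (mem_Icc.mp hJ).2
    _ = _ := by
        rw [sum_Icc_neg_one_pow_card_mul_sum_powerset hI, Nat.card_Icc, Nat.add_sub_cancel]

/-- Lemma 7 of [VollBLMS/06]: if the families `W, W' : 𝒫({1,…,n-1}) → A` satisfy the
inversion property `W'(I) = (-1)^{|I|} ∑_{J ⊆ I} W(J)` for all `I ⊆ S = {1,…,n-1}`, then for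
every `I ⊆ S` one has `∑_{I ⊆ J ⊆ S} W'(J) = (-1)^{n-1} ∑_{S∖I ⊆ J ⊆ S} W(J)`. -/
theorem inversion_property_sum_over_supersets
    (A : Type*) [CommRing A] (n : ℕ) (hn : 1 ≤ n)
    (W W' : Finset ℕ → A)
    (hWW' : ∀ I ⊆ Finset.Icc 1 (n - 1),
      W' I = (-1 : A) ^ I.card * ∑ J ∈ I.powerset, W J) :
    ∀ I ⊆ Finset.Icc 1 (n - 1),
      ∑ J ∈ (Finset.Icc 1 (n - 1)).powerset.filter (fun J => I ⊆ J), W' J =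
        (-1 : A) ^ (n - 1) *
          ∑ J ∈ (Finset.Icc 1 (n - 1)).powerset.filter
            (fun J => Finset.Icc 1 (n - 1) \ I ⊆ J), W J :=
  inversion_property_sum_over_supersets_general A n W W' hWW'
end

section
/- Let A be a commutative ring, let q be an invertible element of A, let n ≥ 1, and let S := {1,…,n−1}. For a subset I ⊆ S and an element x ∈ A, define B_I(x) := ∑_{w ∈ S_n, Des(w) ⊆ I} x^{inv(w)}. Suppose W, W' : 𝒫(S) → A satisfy, for every I ⊆ S, W'(I) = (−1)^{|I|} · ∑_{J ⊆ I} W(J). Then ∑_{I ⊆ S} B_I(q) · W'(I) = (−1)^{n−1} · q^{n(n−1)/2} · ∑_{I ⊆ S} B_I(q^{−1}) · W(I). -/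
open Finset

/-- `B_I(x) = ∑_{w ∈ S_n, Des(w) ⊆ I} x^{inv(w)}`, the descent-restricted length
generating function (which evaluates to the Gaussian multinomial `binom(n,I)_x`). -/
def BPoly {A : Type*} [CommRing A] (n : ℕ) (I : Finset ℕ) (x : A) : A :=
  ∑ w ∈ Finset.univ.filter fun w : Equiv.Perm (Fin n) => descSet w ⊆ I, x ^ invNum w

/-!
Expanding `W'` and exchanging the sums, the coefficient of `W J` on the left is
`∑_{J ⊆ I ⊆ S} (-1)^|I| B_I(q) = ∑_w q^{inv w} ∑_{J ∪ Des w ⊆ I ⊆ S} (-1)^|I|`.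
The inner alternating sum vanishes unless `J ∪ Des w = S`. Left multiplication by the longest
element `w₀` complements the descent set inside `S` and sends `inv w` to `N - inv w` with
`N = n(n-1)/2`, so that condition reads `Des (w₀ w) ⊆ J`, and reindexing by `w₀ w` turns the
coefficient into `(-1)^(n-1) q^N B_J(q⁻¹)`.
-/

theorem Finset.sum_Icc_neg_one_pow_card_s2 {R α : Type*} [CommRing R] [DecidableEq α]
    {K S : Finset α} (hKS : K ⊆ S) :
    ∑ I ∈ Icc K S, (-1 : R) ^ #I = if K = S then (-1) ^ #S else 0 := by
  have hdisj : ∀ T ∈ (S \ K).powerset, Disjoint K T := fun T hT =>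
    disjoint_sdiff.mono_right (mem_powerset.mp hT)
  rw [Icc_eq_image_powerset hKS, sum_image fun T hT T' hT' h =>
      (union_sdiff_cancel_left (hdisj T hT)).symm.trans
        ((congrArg (· \ K) h).trans (union_sdiff_cancel_left (hdisj T' hT'))),
    sum_congr rfl fun T hT => by rw [card_union_of_disjoint (hdisj T hT), pow_add],
    ← mul_sum]
  have hsign : ∑ T ∈ (S \ K).powerset, (-1 : R) ^ #T = if K = S then 1 else 0 := by
    have h := congrArg (Int.cast : ℤ → R) (sum_powerset_neg_one_pow_card (x := S \ K))
    push_cast at h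
    have hiff : S ⊆ K ↔ K = S := ⟨hKS.antisymm, fun h => h ▸ Subset.rfl⟩
    simpa only [sdiff_eq_empty_iff_subset, hiff] using h
  rw [hsign]
  split_ifs with h
  · rw [h, mul_one]
  · rw [mul_zero]

theorem Finset.sum_powerset_sum_powerset {M α : Type*} [AddCommMonoid M] [DecidableEq α]
    (S : Finset α) (f : Finset α → Finset α → M) :
    ∑ I ∈ S.powerset, ∑ J ∈ I.powerset, f I J = ∑ J ∈ S.powerset, ∑ I ∈ Icc J S, f I J :=
  sum_comm' fun I J => by
    simp only [mem_powerset, mem_Icc]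
    exact ⟨fun h => ⟨⟨h.2, h.1⟩, h.2.trans h.1⟩, fun h => ⟨h.1.2, h.1.1⟩⟩

theorem Units.val_pow_eq_pow_mul_inv_pow {M : Type*} [CommMonoid M] (u : Mˣ) {m k N : ℕ}
    (h : m + k = N) : (u : M) ^ m = (u : M) ^ N * ((u⁻¹ : Mˣ) : M) ^ k := by
  rw [← h, pow_add, mul_assoc, ← mul_pow, Units.mul_inv, one_pow, mul_one]

theorem card_filter_fst_lt_snd (n : ℕ) :
    #{q : Fin n × Fin n | q.1 < q.2} = n * (n - 1) / 2 := by
  rw [card_filter, Fintype.sum_prod_type_right]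
  simp only [← card_filter, filter_gt_eq_Iio, Fin.card_Iio]
  rw [Fin.sum_univ_eq_sum_range (fun i => i), sum_range_id]

theorem invNum_revPerm_mul_add_invNum {n : ℕ} (w : Equiv.Perm (Fin n)) :
    invNum (Fin.revPerm * w) + invNum w = n * (n - 1) / 2 := by
  rw [← card_filter_fst_lt_snd,
    ← card_filter_add_card_filter_not (s := {q : Fin n × Fin n | q.1 < q.2})
      (fun q => w q.1 < w q.2), filter_filter, filter_filter, invNum, invNum]
  congr 2 <;> ext q
  · simp [Fin.rev_lt_rev]
  · simp only [mem_filter, mem_univ, true_and, and_congr_right_iff]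
    exact fun hq => (not_lt.trans (w.injective.ne hq.ne').le_iff_lt).symm

theorem descSet_subset_Icc {n : ℕ} (w : Equiv.Perm (Fin n)) :
    descSet w ⊆ Icc 1 (n - 1) :=
  filter_subset _ _

theorem descSet_revPerm_mul {n : ℕ} (w : Equiv.Perm (Fin n)) :
    descSet (Fin.revPerm * w) = Icc 1 (n - 1) \ descSet w := by
  rw [descSet, descSet, ← filter_not]
  refine filter_congr fun i hi => ?_
  obtain ⟨hi1, hin⟩ := mem_Icc.mp hi
  have hne : (⟨i - 1, by omega⟩ : Fin n) ≠ ⟨i, by omega⟩ := by rw [Ne, Fin.mk.injEq]; omega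
  simp only [permVal, dif_pos (show i < n by omega), dif_pos (show i - 1 < n by omega),
    Equiv.Perm.mul_apply, Fin.revPerm_apply, ← Fin.lt_def, Fin.rev_lt_rev]
  exact (not_lt.trans (w.injective.ne hne).le_iff_lt).symm

theorem union_descSet_eq_Icc_iff {n : ℕ} {J : Finset ℕ} (hJ : J ⊆ Icc 1 (n - 1))
    (w : Equiv.Perm (Fin n)) :
    J ∪ descSet w = Icc 1 (n - 1) ↔ descSet (Fin.revPerm * w) ⊆ J := by
  rw [descSet_revPerm_mul, sdiff_le_iff', sup_eq_union, Subset.antisymm_iff,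
    and_iff_right (union_subset hJ (descSet_subset_Icc w))]

theorem sum_Icc_neg_one_pow_card_mul_BPoly {A : Type*} [CommRing A] {n : ℕ} (u : Aˣ)
    {J : Finset ℕ} (hJ : J ⊆ Icc 1 (n - 1)) :
    ∑ I ∈ Icc J (Icc 1 (n - 1)), (-1 : A) ^ #I * BPoly n I (u : A) =
      (-1 : A) ^ (n - 1) * (u : A) ^ (n * (n - 1) / 2) * BPoly n J ((u⁻¹ : Aˣ) : A) := by
  set S := Icc 1 (n - 1)
  set c := (-1 : A) ^ (n - 1) * (u : A) ^ (n * (n - 1) / 2)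
  calc ∑ I ∈ Icc J S, (-1 : A) ^ #I * BPoly n I (u : A)
      = ∑ w : Equiv.Perm (Fin n),
          (∑ I ∈ Icc (J ∪ descSet w) S, (-1 : A) ^ #I) * (u : A) ^ invNum w := by
        simp only [BPoly, mul_sum, sum_mul]
        refine sum_comm' fun I w => ?_
        simp only [mem_Icc, mem_filter, mem_univ, true_and, union_subset_iff]
        tauto
    _ = ∑ w : Equiv.Perm (Fin n), if descSet (Fin.revPerm * w) ⊆ J then
          c * ((u⁻¹ : Aˣ) : A) ^ invNum (Fin.revPerm * w) else 0 := by
        refine sum_congr rfl fun w _ => ?_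
        rw [sum_Icc_neg_one_pow_card_s2 (union_subset hJ (descSet_subset_Icc w)), ite_mul, zero_mul]
        refine if_congr (union_descSet_eq_Icc_iff hJ w) ?_ rfl
        rw [Units.val_pow_eq_pow_mul_inv_pow u
          ((add_comm _ _).trans (invNum_revPerm_mul_add_invNum w)), Nat.card_Icc,
          Nat.add_sub_cancel, mul_assoc]
    _ = ∑ v : Equiv.Perm (Fin n), if descSet v ⊆ J then
          c * ((u⁻¹ : Aˣ) : A) ^ invNum v else 0 :=
        Equiv.sum_comp (Equiv.mulLeft Fin.revPerm)
          (fun v => if descSet v ⊆ J then c * ((u⁻¹ : Aˣ) : A) ^ invNum v else 0)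
    _ = c * BPoly n J ((u⁻¹ : Aˣ) : A) := by
        rw [BPoly, sum_filter, mul_sum]
        exact sum_congr rfl fun v _ => by split_ifs <;> simp

theorem functional_equation_of_inversion_property_general
    (A : Type*) [CommRing A] (n : ℕ) (u : Aˣ)
    (W W' : Finset ℕ → A)
    (hWW' : ∀ I ⊆ Finset.Icc 1 (n - 1),
      W' I = (-1 : A) ^ I.card * ∑ J ∈ I.powerset, W J) :
    ∑ I ∈ (Finset.Icc 1 (n - 1)).powerset, BPoly n I (u : A) * W' I =
      (-1 : A) ^ (n - 1) * (u : A) ^ (n * (n - 1) / 2) *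
        ∑ I ∈ (Finset.Icc 1 (n - 1)).powerset, BPoly n I ((u⁻¹ : Aˣ) : A) * W I := by
  calc ∑ I ∈ (Icc 1 (n - 1)).powerset, BPoly n I (u : A) * W' I
      = ∑ I ∈ (Icc 1 (n - 1)).powerset, ∑ J ∈ I.powerset,
          (-1 : A) ^ #I * BPoly n I (u : A) * W J :=
        sum_congr rfl fun I hI => by
          rw [hWW' I (mem_powerset.mp hI), mul_sum, mul_sum]
          exact sum_congr rfl fun J _ => by ring
    _ = ∑ J ∈ (Icc 1 (n - 1)).powerset,
          (∑ I ∈ Icc J (Icc 1 (n - 1)), (-1 : A) ^ #I * BPoly n I (u : A)) * W J := by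
        rw [sum_powerset_sum_powerset]
        simp only [sum_mul]
    _ = _ := by
        rw [mul_sum]
        refine sum_congr rfl fun J hJ => ?_
        rw [sum_Icc_neg_one_pow_card_mul_BPoly u (mem_powerset.mp hJ), mul_assoc]

/-- The abstract local functional equation: if the family `(W_I)` satisfies the inversion
property under `p → p⁻¹`, then
`∑_I B_I(q) W'(I) = (-1)^{n-1} q^{n(n-1)/2} ∑_I B_I(q⁻¹) W(I)` for any invertible `q`. -/
theorem functional_equation_of_inversion_property
    (A : Type*) [CommRing A] (n : ℕ) (hn : 1 ≤ n) (u : Aˣ)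
    (W W' : Finset ℕ → A)
    (hWW' : ∀ I ⊆ Finset.Icc 1 (n - 1),
      W' I = (-1 : A) ^ I.card * ∑ J ∈ I.powerset, W J) :
    ∑ I ∈ (Finset.Icc 1 (n - 1)).powerset, BPoly n I (u : A) * W' I =
      (-1 : A) ^ (n - 1) * (u : A) ^ (n * (n - 1) / 2) *
        ∑ I ∈ (Finset.Icc 1 (n - 1)).powerset, BPoly n I ((u⁻¹ : Aˣ) : A) * W I :=
  functional_equation_of_inversion_property_general A n u W W' hWW'
end

section
/- Let p be a prime, n ≥ 1, and f ∈ ℤ[x_1,…,x_n]. Let μ be the Haar probability measure on ℤ_p^n, and for m ≥ 0 let N_m be the number of x ∈ (ℤ/p^mℤ)^n with f(x) = 0. Then for every real s > 0, the series ∑_{m=0}^{∞} N_m p^{−(n+s)m} converges and ∫_{ℤ_p^n} |f(x)|_p^{s} dμ(x) = p^{s} + (1 − p^{s}) · ∑_{m=0}^{∞} N_m p^{−(n+s)m}. (Equivalently, the Poincaré series P_f(p^{−s}) = ∑_m p^{−nm}N_m p^{−sm} satisfies P_f(p^{−s}) = (1 − p^{−s} Z_f(s))/(1 − p^{−s}),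 where Z_f(s) = ∫_{ℤ_p^n}|f(x)|_p^s dμ is Igusa's local zeta function.) -/
/-!
Put `r = p^{-s}`. For `z ∈ ℤ_p` one has `‖z‖^s = r^{v(z)}`, so the truncated geometric series
`∑_m r^m 𝟙[‖z‖ ≤ p^{-m}]` equals `(1 - r‖z‖^s)/(1 - r)`. Integrating termwise, the `m`-th term
contributes `r^m` times the measure of `{x : ‖f(x)‖ ≤ p^{-m}}`. That set is the preimage of the
zeros of `f` mod `p^m` under reduction `ℤ_p^n → (ℤ/p^m)^n`; the fibres of this surjective
homomorphism are translates of its kernel, so each has Haar measure `p^{-mn}` and the level set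
has measure `N_m p^{-mn}`. Solving `∑_m N_m p^{-(n+s)m} = (1 - r Z_f(s))/(1 - r)` for `Z_f(s)`
gives the formula.
-/

open MeasureTheory

/-- The number `N_m` of solutions of the congruence `f(x) ≡ 0 (mod p^m)` in `n` variables,
i.e. the cardinality of `{x ∈ (ℤ/p^mℤ)^n : f(x) = 0}`. -/
noncomputable def solCount (p n m : ℕ) (f : MvPolynomial (Fin n) ℤ) : ℕ :=
  Nat.card {x : Fin n → ZMod (p ^ m) // MvPolynomial.aeval x f = 0}

theorem MvPolynomial.continuous_aeval {σ R S : Type*} [CommSemiring R] [CommSemiring S]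
    [TopologicalSpace S] [IsTopologicalSemiring S] [Algebra R S] (f : MvPolynomial σ R) :
    Continuous fun x : σ → S => aeval x f := by
  simpa only [aeval_def, eval_map] using continuous_eval (map (algebraMap R S) f)

namespace AddMonoidHom

variable {G H : Type*} [AddGroup G] [AddGroup H]

theorem preimage_singleton_apply (φ : G →+ H) (g : G) :
    φ ⁻¹' {φ g} = (fun x => -g + x) ⁻¹' (φ ⁻¹' {0}) := by
  ext x
  simp only [Set.mem_preimage, Set.mem_singleton_iff, map_add, map_neg]
  rw [neg_add_eq_zero, eq_comm]

variable [MeasurableSpace G] [MeasurableAdd G] {φ : G →+ H}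

theorem measurableSet_preimage_singleton_of_surjective (hφ : Function.Surjective φ)
    (hker : MeasurableSet (φ ⁻¹' {0})) (y : H) :
    MeasurableSet (φ ⁻¹' {y}) := by
  obtain ⟨g, rfl⟩ := hφ y
  rw [preimage_singleton_apply]
  exact measurable_const_add (-g) hker

variable {μ : Measure G} [μ.IsAddLeftInvariant] [IsProbabilityMeasure μ] [Finite H]

theorem measure_preimage_singleton_of_surjective (hφ : Function.Surjective φ)
    (hker : MeasurableSet (φ ⁻¹' {0})) (y : H) :
    μ (φ ⁻¹' {y}) = (Nat.card H : ENNReal)⁻¹ := by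
  have hfib : ∀ y, μ (φ ⁻¹' {y}) = μ (φ ⁻¹' {0}) := fun y => by
    obtain ⟨g, rfl⟩ := hφ y
    rw [preimage_singleton_apply, measure_preimage_add]
  have hmeas := measurableSet_preimage_singleton_of_surjective hφ hker
  have := Fintype.ofFinite H
  have hsum := sum_measure_preimage_singleton (μ := μ) Finset.univ fun y _ => hmeas y
  simp only [hfib, Finset.sum_const, Finset.card_univ, Finset.coe_univ, Set.preimage_univ,
    measure_univ, nsmul_eq_mul, ← Nat.card_eq_fintype_card] at hsum
  rw [hfib y]
  exact ENNReal.eq_inv_of_mul_eq_one_left (by rwa [mul_comm])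

theorem measure_preimage_of_surjective (hφ : Function.Surjective φ)
    (hker : MeasurableSet (φ ⁻¹' {0})) (S : Set H) :
    μ (φ ⁻¹' S) = Nat.card S / Nat.card H := by
  have hS := S.toFinite
  rw [← hS.coe_toFinset, ← sum_measure_preimage_singleton _ fun y _ =>
      measurableSet_preimage_singleton_of_surjective hφ hker y]
  simp only [measure_preimage_singleton_of_surjective hφ hker, Finset.sum_const, nsmul_eq_mul,
    div_eq_mul_inv]
  rw [Nat.card_coe_set_eq, Set.ncard_coe_finset]

end AddMonoidHom

namespace PadicInt

variable {p : ℕ} [hp : Fact p.Prime]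

theorem hasSum_geometric_ite_norm_le {s : ℝ} (hs : 0 < s) (z : ℤ_[p]) :
    HasSum (fun m : ℕ => if ‖z‖ ≤ (p : ℝ) ^ (-m : ℤ) then ((p : ℝ) ^ (-s)) ^ m else 0)
      ((1 - (p : ℝ) ^ (-s) * ‖z‖ ^ s) / (1 - (p : ℝ) ^ (-s))) := by
  have hp1 : (1 : ℝ) < p := mod_cast hp.out.one_lt
  set r : ℝ := (p : ℝ) ^ (-s)
  have hr0 : 0 ≤ r := by positivity
  have hr1 : r < 1 := Real.rpow_lt_one_of_one_lt_of_neg hp1 (neg_lt_zero.2 hs)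
  rcases eq_or_ne z 0 with rfl | hz
  · simpa [Real.zero_rpow hs.ne', div_eq_inv_mul] using hasSum_geometric_of_lt_one hr0 hr1
  · have hnorm : ‖z‖ ^ s = r ^ z.valuation := by
      rw [norm_eq_zpow_neg_valuation hz, ← Real.rpow_intCast, ← Real.rpow_natCast,
        ← Real.rpow_mul (by positivity), ← Real.rpow_mul (by positivity)]
      push_cast
      ring_nf
    have hsum : HasSum (fun m : ℕ => if ‖z‖ ≤ (p : ℝ) ^ (-m : ℤ) then r ^ m else 0)
        (∑ m ∈ Finset.range (z.valuation + 1),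
          if ‖z‖ ≤ (p : ℝ) ^ (-m : ℤ) then r ^ m else 0) := by
      refine hasSum_sum_of_ne_finset_zero fun m hm => if_neg ?_
      rwa [Finset.mem_range, Nat.lt_succ_iff, ← norm_le_pow_iff_le_valuation z hz] at hm
    convert hsum using 1
    rw [Finset.sum_congr rfl fun m hm => if_pos ((norm_le_pow_iff_le_valuation z hz m).2
      (Nat.lt_succ_iff.1 (Finset.mem_range.1 hm))), geom_sum_eq hr1.ne, hnorm, pow_succ]
    have h1 : 1 - r ≠ 0 := sub_ne_zero.2 hr1.ne'
    have h2 : r - 1 ≠ 0 := sub_ne_zero.2 hr1.ne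
    field_simp
    ring

theorem hasSum_measureReal_norm_le_mul_geometric {X : Type*} [MeasurableSpace X]
    {μ : Measure X} [IsProbabilityMeasure μ] {g : X → ℤ_[p]} (hg : Measurable fun x => ‖g x‖)
    {s : ℝ} (hs : 0 < s) :
    HasSum (fun m : ℕ => μ.real {x | ‖g x‖ ≤ (p : ℝ) ^ (-m : ℤ)} * ((p : ℝ) ^ (-s)) ^ m)
      ((1 - (p : ℝ) ^ (-s) * ∫ x, ‖g x‖ ^ s ∂μ) / (1 - (p : ℝ) ^ (-s))) := by
  have hp1 : (1 : ℝ) < p := mod_cast hp.out.one_lt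
  set r : ℝ := (p : ℝ) ^ (-s)
  have hr0 : 0 ≤ r := by positivity
  have hr1 : r < 1 := Real.rpow_lt_one_of_one_lt_of_neg hp1 (neg_lt_zero.2 hs)
  set A : ℕ → Set X := fun m => {x | ‖g x‖ ≤ (p : ℝ) ^ (-m : ℤ)}
  have hA : ∀ m, MeasurableSet (A m) := fun m => measurableSet_le hg measurable_const
  have hF_int : ∀ m, Integrable ((A m).indicator fun _ => r ^ m) μ := fun m =>
    (integrable_const _).indicator (hA m)
  have hF_eq : ∀ m, ∫ x, (A m).indicator (fun _ => r ^ m) x ∂μ = μ.real (A m) * r ^ m :=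
    fun m => integral_indicator_const _ (hA m)
  have hF_sum : Summable fun m => ∫ x, ‖(A m).indicator (fun _ => r ^ m) x‖ ∂μ := by
    refine (summable_geometric_of_lt_one hr0 hr1).of_nonneg_of_le
      (fun m => integral_nonneg fun x => norm_nonneg _) fun m => ?_
    simp_rw [norm_indicator_eq_indicator_norm, Real.norm_of_nonneg (pow_nonneg hr0 m), hF_eq]
    exact mul_le_of_le_one_left (pow_nonneg hr0 m) measureReal_le_one
  have h_int : Integrable (fun x => ‖g x‖ ^ s) μ := by
    refine (integrable_const (1 : ℝ)).mono' (hg.pow_const s).aestronglyMeasurable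
      (ae_of_all _ fun x => ?_)
    rw [Real.norm_of_nonneg (by positivity)]
    exact Real.rpow_le_one (norm_nonneg _) (norm_le_one _) hs.le
  have h_tsum : ∀ x, ∑' m, (A m).indicator (fun _ => r ^ m) x = (1 - r * ‖g x‖ ^ s) / (1 - r) :=
    fun x => (hasSum_geometric_ite_norm_le hs (g x)).tsum_eq
  have key := hasSum_integral_of_summable_integral_norm hF_int hF_sum
  simp_rw [hF_eq, h_tsum] at key
  rwa [integral_div, integral_sub (integrable_const 1) (h_int.const_mul r), integral_const_mul,
    integral_const, probReal_univ, one_smul] at key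

theorem toZModPow_eq_zero_iff (m : ℕ) (x : ℤ_[p]) :
    toZModPow m x = 0 ↔ ‖x‖ ≤ (p : ℝ) ^ (-m : ℤ) := by
  rw [norm_le_pow_iff_mem_span_pow, ← ker_toZModPow, RingHom.mem_ker]

theorem isClosed_compLeft_toZModPow_preimage_zero (ι : Type*) (m : ℕ) :
    IsClosed ((toZModPow m).compLeft ι ⁻¹' {0} : Set (ι → ℤ_[p])) := by
  have : (toZModPow m).compLeft ι ⁻¹' {0} =
      Set.univ.pi fun _ => Metric.closedBall (0 : ℤ_[p]) ((p : ℝ) ^ (-m : ℤ)) := by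
    ext x
    simp [funext_iff, toZModPow_eq_zero_iff]
  rw [this]
  exact isClosed_set_pi fun _ _ => Metric.isClosed_closedBall

theorem surjective_compLeft_toZModPow (ι : Type*) (m : ℕ) :
    Function.Surjective ((toZModPow m).compLeft ι : (ι → ℤ_[p]) → ι → ZMod (p ^ m)) :=
  (ZMod.ringHom_surjective (toZModPow m)).comp_left

theorem toZModPow_aeval {σ : Type*} (m : ℕ) (x : σ → ℤ_[p]) (f : MvPolynomial σ ℤ) :
    toZModPow m (MvPolynomial.aeval x f) = MvPolynomial.aeval (toZModPow m ∘ x) f :=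
  MvPolynomial.comp_aeval_apply x (toZModPow m).toIntAlgHom f

theorem measureReal_norm_aeval_le {n : ℕ} [MeasurableSpace (Fin n → ℤ_[p])]
    [BorelSpace (Fin n → ℤ_[p])] (μ : Measure (Fin n → ℤ_[p])) [IsProbabilityMeasure μ]
    [μ.IsAddLeftInvariant] (f : MvPolynomial (Fin n) ℤ) (m : ℕ) :
    μ.real {x | ‖MvPolynomial.aeval x f‖ ≤ (p : ℝ) ^ (-m : ℤ)} =
      solCount p n m f / ((p : ℝ) ^ m) ^ n := by
  have : NeZero (p ^ m) := ⟨pow_ne_zero m hp.out.ne_zero⟩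
  set φ := ((toZModPow m).compLeft (Fin n) : (Fin n → ℤ_[p]) →+* _).toAddMonoidHom
  have hlev : {x | ‖MvPolynomial.aeval x f‖ ≤ (p : ℝ) ^ (-m : ℤ)} =
      φ ⁻¹' {y | MvPolynomial.aeval y f = 0} := by
    ext x
    rw [Set.mem_ofPred_eq, ← toZModPow_eq_zero_iff, toZModPow_aeval]
    rfl
  rw [measureReal_def, hlev, AddMonoidHom.measure_preimage_of_surjective
    (surjective_compLeft_toZModPow _ m)
    (isClosed_compLeft_toZModPow_preimage_zero _ m).measurableSet]
  simp only [ENNReal.toReal_div, ENNReal.toReal_natCast, Nat.card_fun, Nat.card_zmod,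
    Nat.card_fin, Nat.cast_pow]
  rfl

end PadicInt

theorem igusa_zeta_eq_poincare_series_general
    (p : ℕ) [Fact p.Prime] (n : ℕ)
    (f : MvPolynomial (Fin n) ℤ)
    [MeasurableSpace (Fin n → ℤ_[p])] [BorelSpace (Fin n → ℤ_[p])]
    (μ : Measure (Fin n → ℤ_[p]))
    [IsProbabilityMeasure μ] [μ.IsAddLeftInvariant]
    (s : ℝ) (hs : 0 < s) :
    Summable (fun m : ℕ => (solCount p n m f : ℝ) * (p : ℝ) ^ (-((n : ℝ) + s) * (m : ℝ))) ∧
      ∫ x : Fin n → ℤ_[p], ‖MvPolynomial.aeval x f‖ ^ s ∂μ =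
        (p : ℝ) ^ s + (1 - (p : ℝ) ^ s) *
          ∑' m : ℕ, (solCount p n m f : ℝ) * (p : ℝ) ^ (-((n : ℝ) + s) * (m : ℝ)) := by
  have hp : p.Prime := Fact.out
  have hp0 : (0 : ℝ) < p := mod_cast hp.pos
  have hp1 : (1 : ℝ) < p := mod_cast hp.one_lt
  set r : ℝ := (p : ℝ) ^ (-s)
  have hterm : ∀ m : ℕ, (solCount p n m f : ℝ) * (p : ℝ) ^ (-((n : ℝ) + s) * (m : ℝ)) =
      μ.real {x | ‖MvPolynomial.aeval x f‖ ≤ (p : ℝ) ^ (-m : ℤ)} * r ^ m := by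
    intro m
    rw [PadicInt.measureReal_norm_aeval_le, div_mul_eq_mul_div, mul_div_assoc]
    congr 1
    rw [← Real.rpow_natCast, ← Real.rpow_natCast, ← Real.rpow_natCast, ← Real.rpow_mul hp0.le,
      ← Real.rpow_mul hp0.le, ← Real.rpow_sub hp0]
    ring_nf
  set Z := ∫ x, ‖MvPolynomial.aeval x f‖ ^ s ∂μ
  have hsum : HasSum (fun m : ℕ => (solCount p n m f : ℝ) * (p : ℝ) ^ (-((n : ℝ) + s) * (m : ℝ)))
      ((1 - r * Z) / (1 - r)) := by
    simpa only [hterm] using PadicInt.hasSum_measureReal_norm_le_mul_geometric (μ := μ)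
      (MvPolynomial.continuous_aeval f).norm.measurable hs
  refine ⟨hsum.summable, ?_⟩
  have hr1 : r < 1 := Real.rpow_lt_one_of_one_lt_of_neg hp1 (neg_lt_zero.2 hs)
  have hr0 : r ≠ 0 := (Real.rpow_pos_of_pos hp0 _).ne'
  have hr1' : 1 - r ≠ 0 := sub_ne_zero.2 hr1.ne'
  rw [hsum.tsum_eq, ← inv_inv ((p : ℝ) ^ s), ← Real.rpow_neg hp0.le]
  field_simp
  ring

/-- For Igusa's local zeta function `Z_f(s) = ∫_{ℤ_p^n} |f(x)|_p^s dμ` and the Poincaré series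
`P_f(p^{-s}) = ∑_m N_m p^{-(n+s)m}`: for every real `s > 0` the series converges and
`Z_f(s) = p^s + (1 - p^s) · ∑_{m≥0} N_m p^{-(n+s)m}`
(equivalently, `P_f(p^{-s}) = (1 - p^{-s} Z_f(s))/(1 - p^{-s})`). -/
theorem igusa_zeta_eq_poincare_series
    (p : ℕ) [Fact p.Prime] (n : ℕ) (hn : 1 ≤ n)
    (f : MvPolynomial (Fin n) ℤ)
    [MeasurableSpace (Fin n → ℤ_[p])] [BorelSpace (Fin n → ℤ_[p])]
    (μ : Measure (Fin n → ℤ_[p]))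
    [IsProbabilityMeasure μ] [μ.IsAddLeftInvariant]
    (s : ℝ) (hs : 0 < s) :
    Summable (fun m : ℕ => (solCount p n m f : ℝ) * (p : ℝ) ^ (-((n : ℝ) + s) * (m : ℝ))) ∧
      ∫ x : Fin n → ℤ_[p], ‖MvPolynomial.aeval x f‖ ^ s ∂μ =
        (p : ℝ) ^ s + (1 - (p : ℝ) ^ s) *
          ∑' m : ℕ, (solCount p n m f : ℝ) * (p : ℝ) ^ (-((n : ℝ) + s) * (m : ℝ)) :=
  igusa_zeta_eq_poincare_series_general p n f μ s hs
end

section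
/- Let n ≥ 1, p a prime, and k ≥ 0. The number of additive subgroups of ℤ^n of index p^k is finite and equals ∑ p^{∑_{i=1}^{n} (i−1)·m_i}, where the sum runs over all tuples (m_1,…,m_n) ∈ ℕ^n of non-negative integers with m_1 + … + m_n = k. -/
/-!
A finite-index subgroup `H` of `ℤ × A` is determined by `d = [ℤ : pr₁ H]`, by `K = H ∩ A` and by
the class modulo `K` of any `a` with `(d, a) ∈ H`; every such triple occurs, and `H` then has
index `d · [A : K]`. So the subgroups of index `N` of `ℤ × A` number `∑_{e ∣ N} a_e(A) · e`, where
`a_e(A)` counts the subgroups of index `e` of `A`. For `A = ℤⁿ` and `N = pᵏ`, write `e = pʲ`: the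
new coordinate receives `m₀ = k - j`, and the factor `pʲ` raises the weight of each old coordinate
by one.
-/

open Finset

theorem Finset.Nat.sum_antidiagonalTuple_succ {M : Type*} [AddCommMonoid M] (k n : ℕ)
    (f : (Fin (k + 1) → ℕ) → M) :
    ∑ x ∈ antidiagonalTuple (k + 1) n, f x =
      ∑ ni ∈ antidiagonal n, ∑ x ∈ antidiagonalTuple k ni.2, f (Fin.cons ni.1 x) := by
  change (Multiset.map f (List.Nat.antidiagonalTuple (k + 1) n : Multiset _)).sum =
    (Multiset.map _ (List.Nat.antidiagonal n : Multiset (ℕ × ℕ))).sum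
  simp only [List.Nat.antidiagonalTuple, Multiset.map_coe, Multiset.sum_coe, List.map_flatMap]
  induction List.Nat.antidiagonal n <;>
    simp_all [Finset.sum, antidiagonalTuple, Multiset.Nat.antidiagonalTuple, Function.comp_def]

theorem Finset.Nat.sum_antidiagonalTuple_succ_pow_weight (p n k : ℕ) :
    ∑ m ∈ antidiagonalTuple (n + 1) k, p ^ (∑ i : Fin (n + 1), (i : ℕ) * m i) =
      ∑ j ∈ range (k + 1),
        (∑ m ∈ antidiagonalTuple n j, p ^ (∑ i : Fin n, (i : ℕ) * m i)) * p ^ j := by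
  have hweight : ∀ a j (m : Fin n → ℕ), m ∈ antidiagonalTuple n j →
      ∑ i : Fin (n + 1), (i : ℕ) * Fin.cons (α := fun _ ↦ ℕ) a m i =
        ∑ i : Fin n, (i : ℕ) * m i + j := by
    intro a j m hm
    rw [mem_antidiagonalTuple] at hm
    simp [Fin.sum_univ_succ, add_mul, sum_add_distrib, hm]
  rw [sum_antidiagonalTuple_succ, antidiagonal_eq_map', sum_map]
  refine sum_congr rfl fun j _ ↦ ?_
  rw [sum_mul]
  exact sum_congr rfl fun m hm ↦ by rw [hweight _ _ _ hm, pow_add]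

def AddEquiv.subgroupsOfIndexCongr {G G' : Type*} [AddGroup G] [AddGroup G'] (e : G ≃+ G')
    (N : ℕ) : {H : AddSubgroup G // H.index = N} ≃ {H : AddSubgroup G' // H.index = N} :=
  e.mapAddSubgroup.toEquiv.subtypeEquiv fun H ↦ by
    simp [AddSubgroup.index_map_equiv]

theorem AddSubgroup.card_index_eq_of_subsingleton {G : Type*} [AddGroup G] [Subsingleton G]
    (N : ℕ) :
    Nat.card {H : AddSubgroup G // H.index = N} = if N = 1 then 1 else 0 := by
  have hidx (H : AddSubgroup G) : H.index = 1 := by rw [Subsingleton.elim H ⊤, index_top]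
  split_ifs with hN
  · subst hN
    exact Nat.card_eq_one_iff_unique.2
      ⟨⟨fun _ _ ↦ Subtype.ext (Subsingleton.elim _ _)⟩, ⟨⟨⊤, index_top⟩⟩⟩
  · exact Nat.card_eq_zero.2 (.inl ⟨fun H ↦ hN (H.2 ▸ hidx H.1)⟩)

theorem AddSubgroup.zmultiples_index_eq (J : AddSubgroup ℤ) : zmultiples (J.index : ℤ) = J := by
  obtain ⟨g, rfl⟩ := Int.subgroup_cyclic J
  rw [← zmultiples_eq_closure, Int.index_zmultiples, Int.zmultiples_natAbs]

theorem Nat.div_ne_zero_of_mem_divisors {N e : ℕ} (he : e ∈ N.divisors) : N / e ≠ 0 :=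
  (Nat.div_pos (Nat.divisor_le he) (Nat.pos_of_mem_divisors he)).ne'

namespace IntProd

variable {A : Type*} [AddCommGroup A] {K : AddSubgroup A}

def subgroup (d : ℕ) (c : A ⧸ K) : AddSubgroup (ℤ × A) :=
  (((QuotientAddGroup.mk' K).comp (AddMonoidHom.snd ℤ A) -
      (zmultiplesHom _ c).comp (AddMonoidHom.fst ℤ A)).ker).map
    ((zmultiplesHom ℤ (d : ℤ)).prodMap (AddMonoidHom.id A))

theorem mem_subgroup {d : ℕ} {c : A ⧸ K} {z : ℤ × A} :
    z ∈ subgroup d c ↔ ∃ t : ℤ, z.1 = t * d ∧ (z.2 : A ⧸ K) = t • c := by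
  simp [subgroup, Prod.ext_iff, and_comm, sub_eq_zero, eq_comm (b := z.1)]

theorem comap_inr_subgroup {d : ℕ} (hd : d ≠ 0) (c : A ⧸ K) :
    (subgroup d c).comap (AddMonoidHom.inr ℤ A) = K := by
  ext a
  simp [mem_subgroup, eq_comm (a := (0 : ℤ)), hd, QuotientAddGroup.eq_zero_iff]

theorem natCast_mk_mem_subgroup_iff {d : ℕ} (hd : d ≠ 0) {c : A ⧸ K} {a : A} :
    ((d : ℤ), a) ∈ subgroup d c ↔ (a : A ⧸ K) = c := by
  simp [mem_subgroup, eq_comm (a := (d : ℤ)), mul_eq_right₀, hd]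

theorem subgroup_injective {d : ℕ} (hd : d ≠ 0) :
    Function.Injective (subgroup d : A ⧸ K → AddSubgroup (ℤ × A)) := by
  intro c c' h
  have hc : ((d : ℤ), c.out) ∈ subgroup d c' :=
    h ▸ (natCast_mk_mem_subgroup_iff hd).2 (QuotientAddGroup.out_eq' c)
  rwa [natCast_mk_mem_subgroup_iff hd, QuotientAddGroup.out_eq'] at hc

theorem exists_eq_subgroup (H : AddSubgroup (ℤ × A)) (hH : H.index ≠ 0) :
    ∃ d ≠ 0, ∃ (K : AddSubgroup A) (c : A ⧸ K), H = subgroup d c := by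
  set J := H.map (AddMonoidHom.fst ℤ A)
  have hJ : J.index ≠ 0 := by
    have hdvd := AddSubgroup.index_dvd_of_le (AddSubgroup.le_comap_map (AddMonoidHom.fst ℤ A) H)
    rw [AddSubgroup.index_comap_of_surjective J Prod.fst_surjective] at hdvd
    exact ne_zero_of_dvd_ne_zero hH hdvd
  obtain ⟨⟨x, a₀⟩, ha₀, hx⟩ : (J.index : ℤ) ∈ J :=
    J.zmultiples_index_eq.le (AddSubgroup.mem_zmultiples _)
  simp only [AddMonoidHom.coe_fst] at hx
  subst hx
  refine ⟨J.index, hJ, H.comap (AddMonoidHom.inr ℤ A), a₀, ?_⟩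
  ext ⟨x, a⟩
  simp only [mem_subgroup, ← QuotientAddGroup.mk_zsmul, QuotientAddGroup.eq_iff_sub_mem,
    AddSubgroup.mem_comap, AddMonoidHom.inr_apply]
  constructor
  · intro hxa
    obtain ⟨t, ht⟩ := AddSubgroup.mem_zmultiples_iff.1
      (J.zmultiples_index_eq.ge (AddSubgroup.mem_map_of_mem _ hxa))
    simp only [AddMonoidHom.coe_fst, smul_eq_mul] at ht
    refine ⟨t, ht.symm, ?_⟩
    convert H.sub_mem hxa (H.zsmul_mem ha₀ t) using 1
    ext <;> simp [← ht]
  · rintro ⟨t, rfl, ht⟩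
    convert H.add_mem (H.zsmul_mem ha₀ t) ht using 1
    ext <;> simp

theorem index_subgroup {d : ℕ} (hd : d ≠ 0) (c : A ⧸ K) :
    (subgroup d c).index = d * K.index := by
  have hinj : Function.Injective ((zmultiplesHom ℤ (d : ℤ)).prodMap (AddMonoidHom.id A)) :=
    Prod.map_injective.mpr ⟨mul_left_injective₀ (by exact_mod_cast hd), Function.injective_id⟩
  have hsurj : Function.Surjective ((QuotientAddGroup.mk' K).comp (AddMonoidHom.snd ℤ A) -
      (zmultiplesHom _ c).comp (AddMonoidHom.fst ℤ A)) := fun q ↦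
    ⟨(0, q.out), by simp⟩
  rw [subgroup, AddSubgroup.index_map_of_injective _ hinj, AddMonoidHom.range_prodMap,
    AddSubgroup.index_prod, AddSubgroup.range_zmultiplesHom, Int.index_zmultiples,
    AddMonoidHom.range_eq_top.mpr Function.surjective_id, AddSubgroup.index_top,
    AddSubgroup.index_ker, AddMonoidHom.range_eq_top.mpr hsurj, AddSubgroup.card_top,
    AddSubgroup.index_eq_card, mul_one, mul_comm, Int.natAbs_natCast]

variable (A) in
def ofDivisor (N : ℕ)
    (x : Σ e : N.divisors, Σ K : {K : AddSubgroup A // K.index = e}, A ⧸ (K : AddSubgroup A)) :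
    {H : AddSubgroup (ℤ × A) // H.index = N} :=
  ⟨subgroup (N / x.1) x.2.2, by
    rw [index_subgroup (Nat.div_ne_zero_of_mem_divisors x.1.2), x.2.1.2,
      Nat.div_mul_cancel (Nat.dvd_of_mem_divisors x.1.2)]⟩

theorem bijective_ofDivisor {N : ℕ} (hN : N ≠ 0) : Function.Bijective (ofDivisor A N) := by
  constructor
  · rintro ⟨⟨e, he⟩, ⟨K, hK⟩, c⟩ ⟨⟨e', he'⟩, ⟨K', hK'⟩, c'⟩ h
    replace h : subgroup (N / e) c = subgroup (N / e') c' := congrArg Subtype.val h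
    obtain rfl : K = K' := calc
      K = (subgroup (N / e) c).comap (AddMonoidHom.inr ℤ A) :=
        (comap_inr_subgroup (Nat.div_ne_zero_of_mem_divisors he) c).symm
      _ = K' := h ▸ comap_inr_subgroup (Nat.div_ne_zero_of_mem_divisors he') c'
    obtain rfl : e = e' := hK.symm.trans hK'
    obtain rfl : c = c' := subgroup_injective (Nat.div_ne_zero_of_mem_divisors he) h
    rfl
  · rintro ⟨H, hH⟩
    obtain ⟨d, hd, K, c, rfl⟩ := exists_eq_subgroup H (hH ▸ hN)
    rw [index_subgroup hd] at hH
    have hK : K.index ∈ N.divisors := Nat.mem_divisors.2 ⟨Dvd.intro_left _ hH, hN⟩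
    refine ⟨⟨⟨K.index, hK⟩, ⟨K, rfl⟩, c⟩, Subtype.ext ?_⟩
    change subgroup (N / K.index) c = subgroup d c
    rw [← hH, Nat.mul_div_cancel _ (Nat.pos_of_mem_divisors hK)]

theorem finite_index_eq {N : ℕ} (hN : N ≠ 0)
    (hfin : ∀ e ∈ N.divisors, Finite {K : AddSubgroup A // K.index = e}) :
    Finite {H : AddSubgroup (ℤ × A) // H.index = N} := by
  have (e : N.divisors) : Finite {K : AddSubgroup A // K.index = e} := hfin e e.2
  have (e : N.divisors) (K : {K : AddSubgroup A // K.index = e}) : Finite (A ⧸ K.1) :=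
    AddSubgroup.index_ne_zero_iff_finite.1 (K.2.trans_ne (Nat.pos_of_mem_divisors e.2).ne')
  exact Finite.of_surjective _ (bijective_ofDivisor hN).2

theorem card_index_eq {N : ℕ} (hN : N ≠ 0)
    (hfin : ∀ e ∈ N.divisors, Finite {K : AddSubgroup A // K.index = e}) :
    Nat.card {H : AddSubgroup (ℤ × A) // H.index = N} =
      ∑ e ∈ N.divisors, Nat.card {K : AddSubgroup A // K.index = e} * e := by
  have (e : N.divisors) : Fintype {K : AddSubgroup A // K.index = e} :=
    have := hfin e e.2; Fintype.ofFinite _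
  have (e : N.divisors) (K : {K : AddSubgroup A // K.index = e}) : Finite (A ⧸ K.1) :=
    AddSubgroup.index_ne_zero_iff_finite.1 (K.2.trans_ne (Nat.pos_of_mem_divisors e.2).ne')
  rw [← Nat.card_eq_of_bijective _ (bijective_ofDivisor hN), Nat.card_sigma,
    ← Finset.sum_coe_sort N.divisors]
  refine sum_congr rfl fun e _ ↦ ?_
  simp only [Nat.card_sigma, ← AddSubgroup.index_eq_card]
  simp [fun K : {K : AddSubgroup A // K.index = e} ↦ K.2]

end IntProd

theorem card_addSubgroups_of_index_prime_pow_general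
    (n : ℕ) (p : ℕ) (hp : p.Prime) (k : ℕ) :
    {H : AddSubgroup (Fin n → ℤ) | H.index = p ^ k}.Finite ∧
      Nat.card {H : AddSubgroup (Fin n → ℤ) // H.index = p ^ k} =
        ∑ m ∈ Finset.Nat.antidiagonalTuple n k, p ^ (∑ i : Fin n, (i : ℕ) * m i) := by
  induction n generalizing k with
  | zero =>
    refine ⟨Set.toFinite _, ?_⟩
    rw [AddSubgroup.card_index_eq_of_subsingleton]
    cases k <;> simp [hp.ne_one]
  | succ n ih =>
    have hfin : ∀ e ∈ (p ^ k).divisors, Finite {K : AddSubgroup (Fin n → ℤ) // K.index = e} := by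
      intro e he
      obtain ⟨j, -, rfl⟩ := (Nat.mem_divisors_prime_pow hp k).1 he
      exact (ih j).1.to_subtype
    have hpk : p ^ k ≠ 0 := pow_ne_zero k hp.ne_zero
    let cons :=
      (Fin.consLinearEquiv ℤ fun _ : Fin (n + 1) ↦ ℤ).toAddEquiv.subgroupsOfIndexCongr (p ^ k)
    have := IntProd.finite_index_eq hpk hfin
    refine ⟨Set.finite_coe_iff.1 (Finite.of_equiv _ cons), ?_⟩
    rw [← Nat.card_congr cons, IntProd.card_index_eq hpk hfin, Nat.sum_divisors_prime_pow hp,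
      Finset.Nat.sum_antidiagonalTuple_succ_pow_weight]
    exact sum_congr rfl fun j _ ↦ by rw [(ih j).2]

/-- The number of additive subgroups of `ℤ^n` of index `p^k` is finite and equals
`∑ p^{∑_{i=1}^{n} (i-1)·m_i}`, the sum running over all tuples `(m_1,…,m_n) ∈ ℕ^n` with
`m_1 + … + m_n = k` (here the tuples are indexed by `Fin n`, so `i ∈ Fin n` corresponds to
the `(i+1)`-st coordinate and the exponent weight `(i+1)-1 = i`). -/
theorem card_addSubgroups_of_index_prime_pow
    (n : ℕ) (hn : 1 ≤ n) (p : ℕ) (hp : p.Prime) (k : ℕ) :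
    {H : AddSubgroup (Fin n → ℤ) | H.index = p ^ k}.Finite ∧
      Nat.card {H : AddSubgroup (Fin n → ℤ) // H.index = p ^ k} =
        ∑ m ∈ Finset.Nat.antidiagonalTuple n k, p ^ (∑ i : Fin n, (i : ℕ) * m i) :=
  card_addSubgroups_of_index_prime_pow_general n p hp k
end

section
/- Let L be a (not necessarily associative or commutative) ring whose additive group is finitely generated, i.e. an abelian group of finite rank with a bi-additive multiplication. For m ≥ 1 let b_m(L) denote the number of subrings of L of additive index m (this number is finite). Then the function m ↦ b_m(L) is multiplicative: if gcd(m, m') = 1 then b_{m m'}(L) = b_m(L) · b_{m'}(L). Consequently the zeta function ζ_L(s) = ∑_m b_m(L) m^{−s} has an Euler product ζ_L(s) = ∏_p ζ_{L,p}(s) over the primes p. -/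
/-!
For coprime `m`, `m'`, intersection `(H₁, H₂) ↦ H₁ ⊓ H₂` is a bijection from pairs of subrings of
indices `m` and `m'` onto subrings of index `m * m'`, with inverse `H ↦ ({x | m' • x ∈ H},
{x | m • x ∈ H})`. Everything rests on Bézout: if `m • x` and `m' • x` lie in a subgroup, so does
`x`. In particular `H₁ ⊔ H₂ = L`, so the indices of `H₁` and `H₂` multiply; they are the right
ones because, by Cauchy's theorem, every prime dividing `[L : H₁]` divides `m`.
-/

section AddSubgroupClass

variable {G S : Type*} [AddGroup G] [SetLike S G] [AddSubgroupClass S G] {K : S} {a b : ℕ}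
  {x : G}

theorem mem_of_nsmul_mem_of_nsmul_mem (hab : a.Coprime b) (ha : a • x ∈ K) (hb : b • x ∈ K) :
    x ∈ K := by
  obtain ⟨u, v, huv⟩ := Nat.isCoprime_iff_coprime.mpr hab
  have hx : x = u • (a • x) + v • (b • x) := by
    rw [← natCast_zsmul, ← natCast_zsmul, ← mul_zsmul, ← mul_zsmul, ← add_zsmul, huv, one_zsmul]
  rw [hx]
  exact add_mem (zsmul_mem ha u) (zsmul_mem hb v)

theorem nsmul_mem_iff_of_coprime (hab : a.Coprime b) (hK : ∀ y : G, a • y ∈ K) :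
    b • x ∈ K ↔ x ∈ K :=
  ⟨mem_of_nsmul_mem_of_nsmul_mem hab (hK x), fun hx ↦ nsmul_mem hx b⟩

end AddSubgroupClass

namespace AddSubgroup

variable {G : Type*} [AddCommGroup G] {a b : ℕ} {K₁ K₂ : AddSubgroup G}

theorem sup_eq_top_of_nsmul_mem (hab : a.Coprime b) (h₁ : ∀ x, a • x ∈ K₁)
    (h₂ : ∀ x, b • x ∈ K₂) : K₁ ⊔ K₂ = ⊤ :=
  eq_top_iff.mpr fun x _ ↦
    mem_of_nsmul_mem_of_nsmul_mem hab (mem_sup_left (h₁ x)) (mem_sup_right (h₂ x))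

theorem index_inf_of_sup_eq_top (h : K₁ ⊔ K₂ = ⊤) : (K₁ ⊓ K₂).index = K₁.index * K₂.index := by
  rw [← relIndex_mul_index (inf_le_right : K₁ ⊓ K₂ ≤ K₂), inf_relIndex_right,
    ← relIndex_sup_right K₂ K₁, sup_comm, h, relIndex_top_right]

/-- Cauchy's theorem: a prime dividing the index yields an element of that order in `G ⧸ K`,
which is killed by `a`. -/
theorem index_coprime_of_nsmul_mem (hab : a.Coprime b) {K : AddSubgroup G} (hK : K.index ≠ 0)
    (h : ∀ x, a • x ∈ K) : K.index.Coprime b := by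
  have : Finite (G ⧸ K) := index_ne_zero_iff_finite.mp hK
  refine Nat.coprime_of_dvd fun p hp hpK ↦ (Nat.Prime.coprime_iff_not_dvd hp).mp ?_
  have : Fact p.Prime := ⟨hp⟩
  obtain ⟨q, hq⟩ := exists_prime_addOrderOf_dvd_card' (G := G ⧸ K) p (index_eq_card K ▸ hpK)
  have hpa : p ∣ a := by
    induction q using QuotientAddGroup.induction_on with
    | H x => exact hq ▸ addOrderOf_dvd_of_nsmul_eq_zero ((QuotientAddGroup.eq_zero_iff _).mpr (h x))
  exact hab.coprime_dvd_left hpa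

theorem index_inf_eq_mul_iff (hab : a.Coprime b) (ha : a ≠ 0) (hb : b ≠ 0)
    (h₁ : ∀ x, a • x ∈ K₁) (h₂ : ∀ x, b • x ∈ K₂) :
    (K₁ ⊓ K₂).index = a * b ↔ K₁.index = a ∧ K₂.index = b := by
  rw [index_inf_of_sup_eq_top (sup_eq_top_of_nsmul_mem hab h₁ h₂)]
  refine ⟨fun h ↦ ?_, fun ⟨e₁, e₂⟩ ↦ e₁ ▸ e₂ ▸ rfl⟩
  have c₁ := index_coprime_of_nsmul_mem hab (left_ne_zero_of_mul (h ▸ mul_ne_zero ha hb)) h₁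
  have c₂ := index_coprime_of_nsmul_mem hab.symm (right_ne_zero_of_mul (h ▸ mul_ne_zero ha hb)) h₂
  exact ⟨Nat.dvd_antisymm (c₁.dvd_of_dvd_mul_right (h ▸ dvd_mul_right _ _))
      (c₂.symm.dvd_of_dvd_mul_right (h ▸ dvd_mul_right _ _)),
    Nat.dvd_antisymm (c₂.dvd_of_dvd_mul_left (h ▸ dvd_mul_left _ _))
      (c₁.symm.dvd_of_dvd_mul_left (h ▸ dvd_mul_left _ _))⟩

/-- A subgroup of index `n` contains `n • G`, and `G ⧸ n • G` is a finite group since `G` is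
finitely generated. -/
theorem finite_setOf_index_eq [AddGroup.FG G] {n : ℕ} (hn : n ≠ 0) :
    {K : AddSubgroup G | K.index = n}.Finite := by
  let N := (nsmulAddMonoidHom (α := G) n).range
  have := AddCommGroup.finite_of_fg_isAddTorsion (G ⧸ N)
    (AddCommGroup.isAddTorsion_quotient_range_nsmulAddMonoidHom G hn)
  have hfin : {K : AddSubgroup G | N ≤ K}.Finite :=
    Set.finite_coe_iff.mp (Finite.of_equiv _ (QuotientAddGroup.comapMk'OrderIso N).toEquiv)
  refine hfin.subset fun K hK ↦ ?_
  rintro _ ⟨x, rfl⟩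
  exact (hK : K.index = n) ▸ K.nsmul_index_mem x

end AddSubgroup

namespace NonUnitalSubring

variable {L : Type*} [NonUnitalNonAssocRing L] {a b : ℕ}

theorem nsmul_mem_of_index_eq {H : NonUnitalSubring L} {n : ℕ}
    (hH : H.toAddSubgroup.index = n) (x : L) : n • x ∈ H :=
  hH ▸ H.toAddSubgroup.nsmul_index_mem x

/-- `{x | b • x ∈ H}` is closed under multiplication because both `a • (b • xy)` and
`b • (b • xy) = b • x * b • y` lie in `H`. -/
def nsmulPreimage (H : NonUnitalSubring L) (hab : a.Coprime b) (hH : ∀ x, (a * b) • x ∈ H) :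
    NonUnitalSubring L where
  toAddSubgroup := H.toAddSubgroup.comap (nsmulAddMonoidHom b)
  mul_mem' {x y} (hx : b • x ∈ H) (hy : b • y ∈ H) := by
    change b • (x * y) ∈ H
    refine mem_of_nsmul_mem_of_nsmul_mem hab ?_ ?_
    · rw [smul_smul]
      exact hH _
    · rw [smul_smul, ← smul_mul_smul_comm]
      exact H.mul_mem hx hy

theorem exists_inf_eq_of_index_eq_mul (hab : a.Coprime b) (ha : a ≠ 0) (hb : b ≠ 0)
    {H : NonUnitalSubring L} (hH : H.toAddSubgroup.index = a * b) :
    ∃ H₁ H₂ : NonUnitalSubring L, H₁.toAddSubgroup.index = a ∧ H₂.toAddSubgroup.index = b ∧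
      H₁ ⊓ H₂ = H := by
  let H₁ := H.nsmulPreimage hab (nsmul_mem_of_index_eq hH)
  let H₂ := H.nsmulPreimage hab.symm (nsmul_mem_of_index_eq (hH.trans (mul_comm a b)))
  have h₁ (x : L) : a • x ∈ H₁ := by
    change b • a • x ∈ H
    rw [smul_smul, mul_comm]
    exact nsmul_mem_of_index_eq hH x
  have h₂ (x : L) : b • x ∈ H₂ := by
    change a • b • x ∈ H
    rw [smul_smul]
    exact nsmul_mem_of_index_eq hH x
  have hinf : H₁ ⊓ H₂ = H := by
    ext x
    exact ⟨fun ⟨hb, ha⟩ ↦ mem_of_nsmul_mem_of_nsmul_mem hab ha hb,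
      fun hx ↦ ⟨nsmul_mem hx b, nsmul_mem hx a⟩⟩
  have hidx := (AddSubgroup.index_inf_eq_mul_iff hab ha hb (K₁ := H₁.toAddSubgroup)
    (K₂ := H₂.toAddSubgroup) h₁ h₂).mp ((congrArg (·.toAddSubgroup.index) hinf).trans hH)
  exact ⟨H₁, H₂, hidx.1, hidx.2, hinf⟩

theorem inf_injective_of_nsmul_mem (hab : a.Coprime b) {H₁ H₂ H₁' H₂' : NonUnitalSubring L}
    (h₁ : ∀ x, a • x ∈ H₁) (h₂ : ∀ x, b • x ∈ H₂) (h₁' : ∀ x, a • x ∈ H₁')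
    (h₂' : ∀ x, b • x ∈ H₂') (h : H₁ ⊓ H₂ = H₁' ⊓ H₂') : H₁ = H₁' ∧ H₂ = H₂' := by
  have key (y : L) : y ∈ H₁ ⊓ H₂ ↔ y ∈ H₁' ⊓ H₂' := by rw [h]
  constructor <;> ext x
  · simpa [h₂, h₂', nsmul_mem_iff_of_coprime hab h₁, nsmul_mem_iff_of_coprime hab h₁'] using
      key (b • x)
  · simpa [h₁, h₁', nsmul_mem_iff_of_coprime hab.symm h₂, nsmul_mem_iff_of_coprime hab.symm h₂']
      using key (a • x)

def infOfCoprimeIndex {m m' : ℕ} (hco : m.Coprime m') (hm : m ≠ 0) (hm' : m' ≠ 0) :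
    {H : NonUnitalSubring L // H.toAddSubgroup.index = m} ×
        {H : NonUnitalSubring L // H.toAddSubgroup.index = m'} →
      {H : NonUnitalSubring L // H.toAddSubgroup.index = m * m'} :=
  fun ⟨⟨H₁, h₁⟩, ⟨H₂, h₂⟩⟩ ↦ ⟨H₁ ⊓ H₂,
    (AddSubgroup.index_inf_eq_mul_iff hco hm hm' (K₁ := H₁.toAddSubgroup)
      (K₂ := H₂.toAddSubgroup) (nsmul_mem_of_index_eq h₁) (nsmul_mem_of_index_eq h₂)).mpr ⟨h₁, h₂⟩⟩

theorem infOfCoprimeIndex_bijective {m m' : ℕ} (hco : m.Coprime m') (hm : m ≠ 0) (hm' : m' ≠ 0) :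
    Function.Bijective (infOfCoprimeIndex (L := L) hco hm hm') := by
  constructor
  · rintro ⟨⟨H₁, h₁⟩, ⟨H₂, h₂⟩⟩ ⟨⟨H₁', h₁'⟩, ⟨H₂', h₂'⟩⟩ h
    obtain ⟨rfl, rfl⟩ := inf_injective_of_nsmul_mem hco (nsmul_mem_of_index_eq h₁)
      (nsmul_mem_of_index_eq h₂) (nsmul_mem_of_index_eq h₁') (nsmul_mem_of_index_eq h₂')
      (congrArg Subtype.val h)
    rfl
  · rintro ⟨H, hH⟩
    obtain ⟨H₁, H₂, h₁, h₂, rfl⟩ := exists_inf_eq_of_index_eq_mul hco hm hm' hH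
    exact ⟨(⟨H₁, h₁⟩, ⟨H₂, h₂⟩), rfl⟩

end NonUnitalSubring

/-- For a ring `L` (an abelian group of finite rank with a bi-additive multiplication, not
necessarily associative, commutative or unital), and `m ≥ 1`, the number `b_m(L)` of subrings
of `L` of additive index `m` is finite, and `m ↦ b_m(L)` is multiplicative: if
`gcd(m, m') = 1` then `b_{mm'}(L) = b_m(L)·b_{m'}(L)`. (This is the coefficient-wise form of
the Euler product `ζ_L(s) = ∏_p ζ_{L,p}(s)`.) -/
theorem subring_counting_function_multiplicative
    (L : Type*) [NonUnitalNonAssocRing L] [AddGroup.FG L] :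
    (∀ m : ℕ, 1 ≤ m →
      {H : NonUnitalSubring L | H.toAddSubgroup.index = m}.Finite) ∧
    ∀ m m' : ℕ, 1 ≤ m → 1 ≤ m' → Nat.Coprime m m' →
      Nat.card {H : NonUnitalSubring L // H.toAddSubgroup.index = m * m'} =
        Nat.card {H : NonUnitalSubring L // H.toAddSubgroup.index = m} *
          Nat.card {H : NonUnitalSubring L // H.toAddSubgroup.index = m'} := by
  refine ⟨fun m hm ↦ ?_, fun m m' hm hm' hco ↦ ?_⟩
  · exact (AddSubgroup.finite_setOf_index_eq (Nat.one_le_iff_ne_zero.mp hm)).preimage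
      NonUnitalSubring.toAddSubgroup_injective.injOn
  · rw [← Nat.card_prod, Nat.card_congr (Equiv.ofBijective _
      (NonUnitalSubring.infOfCoprimeIndex_bijective hco (Nat.one_le_iff_ne_zero.mp hm)
        (Nat.one_le_iff_ne_zero.mp hm')))]
end

section
/- In the ring of formal power series ℤ⟦X_1, X_2, X_3⟧ in three variables, let S be the power series whose coefficient at the monomial X_1^{m_1} X_2^{m_2} X_3^{m_3} is 1 if m_3 ≤ m_1 + m_2 and 0 otherwise. Then (1 − X_1 X_3)(1 − X_1)(1 − X_2 X_3)(1 − X_2) · S = 1 − X_1 X_2 X_3. -/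
/-!
Multiplying by `1 - X^e` turns the coefficient function `c` into the difference
`d ↦ c d - c (d - e)`, where `c (d - e)` counts only when `e ≤ d`. Applying the factors in the order
`1 - X 1`, `1 - X 1 * X 2`, `1 - X 0`, `1 - X 0 * X 2`, each difference lowers the dimension of the
support by one: the cone `d 2 ≤ d 0 + d 1` becomes the slice `d 1 = 0` together with the facet
`d 2 = d 0 + d 1`, then two strips in the planes `d 1 = 0` and `d 1 = 1`, then two rays along
`d 2 = d 0`, and finally the two points `0` and `(1, 1, 1)`, with coefficients `1` and `-1`.
-/

open MvPowerSeries

theorem MvPowerSeries.coeff_one_sub_monomial_mul {σ R : Type*} [Ring R] (e d : σ →₀ ℕ)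
    (f : MvPowerSeries σ R) :
    coeff d ((1 - monomial e 1) * f) = coeff d f - if e ≤ d then coeff (d - e) f else 0 := by
  rw [sub_mul, one_mul, map_sub, coeff_monomial_mul]
  split_ifs <;> simp

theorem MvPowerSeries.X_mul_X_eq_monomial {σ R : Type*} [Semiring R] (i j : σ) :
    (X i * X j : MvPowerSeries σ R) = monomial (Finsupp.single i 1 + Finsupp.single j 1) 1 := by
  rw [X_def, X_def, monomial_mul_monomial, one_mul]

theorem Finsupp.fin_three_le_iff (e d : Fin 3 →₀ ℕ) :
    e ≤ d ↔ e 0 ≤ d 0 ∧ e 1 ≤ d 1 ∧ e 2 ≤ d 2 := by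
  simp [Finsupp.le_def, Fin.forall_fin_succ]

theorem Finsupp.fin_three_eq_iff (e d : Fin 3 →₀ ℕ) :
    e = d ↔ e 0 = d 0 ∧ e 1 = d 1 ∧ e 2 = d 2 := by
  simp [Finsupp.ext_iff, Fin.forall_fin_succ]

section Steps

variable (f : MvPowerSeries (Fin 3) ℤ)

theorem coeff_one_sub_X1_mul
    (hf : ∀ d : Fin 3 →₀ ℕ, coeff d f = if d 2 ≤ d 0 + d 1 then 1 else 0)
    (d : Fin 3 →₀ ℕ) :
    coeff d ((1 - X 1) * f) =
      if (d 1 = 0 ∧ d 2 ≤ d 0) ∨ (1 ≤ d 1 ∧ d 2 = d 0 + d 1) then 1 else 0 := by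
  rw [X_def, coeff_one_sub_monomial_mul]
  simp only [hf, Finsupp.fin_three_le_iff, Finsupp.tsub_apply, Finsupp.single_apply, Fin.isValue,
    Fin.reduceEq, reduceIte, tsub_zero]
  split_ifs <;> omega

theorem coeff_one_sub_X1X2_mul
    (hf : ∀ d : Fin 3 →₀ ℕ, coeff d f =
      if (d 1 = 0 ∧ d 2 ≤ d 0) ∨ (1 ≤ d 1 ∧ d 2 = d 0 + d 1) then 1 else 0)
    (d : Fin 3 →₀ ℕ) :
    coeff d ((1 - X 1 * X 2) * f) =
      if d 1 = 0 ∧ d 2 ≤ d 0 then 1 else if d 1 = 1 ∧ 1 ≤ d 2 ∧ d 2 ≤ d 0 then -1 else 0 := by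
  rw [X_mul_X_eq_monomial, coeff_one_sub_monomial_mul]
  simp only [hf, Finsupp.fin_three_le_iff, Finsupp.tsub_apply, Finsupp.add_apply,
    Finsupp.single_apply, Fin.isValue, Fin.reduceEq, reduceIte, add_zero, zero_add, tsub_zero]
  split_ifs <;> omega

theorem coeff_one_sub_X0_mul
    (hf : ∀ d : Fin 3 →₀ ℕ, coeff d f =
      if d 1 = 0 ∧ d 2 ≤ d 0 then 1 else if d 1 = 1 ∧ 1 ≤ d 2 ∧ d 2 ≤ d 0 then -1 else 0)
    (d : Fin 3 →₀ ℕ) :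
    coeff d ((1 - X 0) * f) =
      if d 1 = 0 ∧ d 2 = d 0 then 1 else if d 1 = 1 ∧ 1 ≤ d 0 ∧ d 2 = d 0 then -1 else 0 := by
  rw [X_def, coeff_one_sub_monomial_mul]
  simp only [hf, Finsupp.fin_three_le_iff, Finsupp.tsub_apply, Finsupp.single_apply, Fin.isValue,
    Fin.reduceEq, reduceIte, tsub_zero]
  split_ifs <;> omega

theorem coeff_one_sub_X0X2_mul
    (hf : ∀ d : Fin 3 →₀ ℕ, coeff d f =
      if d 1 = 0 ∧ d 2 = d 0 then 1 else if d 1 = 1 ∧ 1 ≤ d 0 ∧ d 2 = d 0 then -1 else 0)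
    (d : Fin 3 →₀ ℕ) :
    coeff d ((1 - X 0 * X 2) * f) = coeff d (1 - X 0 * X 1 * X 2 : MvPowerSeries (Fin 3) ℤ) := by
  rw [X_mul_X_eq_monomial, coeff_one_sub_monomial_mul, X_mul_X_eq_monomial, X_def,
    monomial_mul_monomial, one_mul, map_sub, coeff_one, coeff_monomial]
  simp only [hf, Finsupp.fin_three_le_iff, Finsupp.fin_three_eq_iff, Finsupp.tsub_apply,
    Finsupp.add_apply, Finsupp.single_apply, Finsupp.coe_zero, Pi.zero_apply, Fin.isValue,
    Fin.reduceEq, reduceIte, add_zero, zero_add, tsub_zero]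
  split_ifs <;> omega

end Steps

/-- In `ℤ⟦X₁,X₂,X₃⟧`, let `S` be the generating function of the polyhedral cone
`m₃ ≤ m₁ + m₂` (coefficient `1` at `X₁^{m₁}X₂^{m₂}X₃^{m₃}` if `m₃ ≤ m₁ + m₂`, and `0`
otherwise). Then `(1 - X₁X₃)(1 - X₁)(1 - X₂X₃)(1 - X₂) · S = 1 - X₁X₂X₃`. -/
theorem generating_function_heisenberg_cone
    (S : MvPowerSeries (Fin 3) ℤ)
    (hS : ∀ d : Fin 3 →₀ ℕ,
      MvPowerSeries.coeff d S = if d 2 ≤ d 0 + d 1 then 1 else 0) :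
    (1 - X 0 * X 2) * (1 - X 0) * (1 - X 1 * X 2) * (1 - X 1) * S =
      1 - X 0 * X 1 * X 2 := by
  have hT₁ := coeff_one_sub_X1_mul S hS
  have hT₂ := coeff_one_sub_X1X2_mul _ hT₁
  have hT₃ := coeff_one_sub_X0_mul _ hT₂
  ext d
  rw [show (1 - X 0 * X 2) * (1 - X 0) * (1 - X 1 * X 2) * (1 - X 1) * S
      = (1 - X 0 * X 2) * ((1 - X 0) * ((1 - X 1 * X 2) * ((1 - X 1) * S))) by ring]
  exact coeff_one_sub_X0X2_mul _ hT₃ d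
end

section
/- Let L be the Heisenberg Lie ring over ℤ and let p be a prime. For every N ≥ 0, the number of Lie subrings of L of additive index p^N is finite and equals ∑ p^{m_2 + 2 m_3}, where the sum runs over all triples (m_1, m_2, m_3) of non-negative integers with m_1 + m_2 + m_3 = N and m_3 ≤ m_1 + m_2. (Equivalently, ζ_{L,p}(s) = ζ_p(s)ζ_p(s−1)ζ_p(2s−2)ζ_p(2s−3)ζ_p(3s−3)^{−1} for every prime p.) -/
/-!
Every subgroup `H ≤ ℤ³` of finite index has a unique basis in Hermite normal form, the rows of
`[[a, b, c], [0, d, e], [0, 0, f]]` with `a, d, f > 0`, `0 ≤ b < d` and `0 ≤ c, e < f`, and its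
index is `a d f`. The bracket of two elements of `H` is an integer multiple of
`[(a, b, c), (0, d, e)] = (0, 0, a d)`, so `H` is a Lie subring iff `f ∣ a d`. For index `p ^ N`
the diagonal is `(p ^ m₁, p ^ m₂, p ^ m₃)` with `m₁ + m₂ + m₃ = N`, the condition reads
`m₃ ≤ m₁ + m₂`, and there are `p ^ m₂ · p ^ m₃ · p ^ m₃` choices of `(b, c, e)`.
-/

open Finset

/-- The Lie bracket of the Heisenberg Lie ring over `ℤ`: on the free `ℤ`-module `ℤ³` with
basis `x, y, z` it is determined by `[x,y] = z`, `[x,z] = [y,z] = 0`; concretely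
`[(a,b,c),(a',b',c')] = (0, 0, ab' - a'b)`. -/
def heisenbergBracket (u v : ℤ × ℤ × ℤ) : ℤ × ℤ × ℤ :=
  (0, 0, u.1 * v.2.1 - v.1 * u.2.1)

def IsLieSubring (H : AddSubgroup (ℤ × ℤ × ℤ)) : Prop :=
  ∀ u ∈ H, ∀ v ∈ H, heisenbergBracket u v ∈ H

theorem eq_of_dvd_sub_of_nonneg_of_lt {n x y : ℤ} (hx : 0 ≤ x) (hxn : x < n) (hy : 0 ≤ y)
    (hyn : y < n) (h : n ∣ x - y) : x = y :=
  sub_eq_zero.mp (Int.eq_zero_of_abs_lt_dvd h (abs_sub_lt_of_nonneg_of_lt hx hxn hy hyn))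

theorem AddSubgroup.exists_ne_zero_forall_mem_iff_dvd (K : AddSubgroup ℤ) {n : ℤ} (hn : n ≠ 0)
    (hnK : n ∈ K) : ∃ a : ℕ, a ≠ 0 ∧ ∀ x, x ∈ K ↔ (a : ℤ) ∣ x := by
  obtain ⟨g, rfl⟩ := Int.subgroup_cyclic K
  have hmem : ∀ x, x ∈ AddSubgroup.closure {g} ↔ (g.natAbs : ℤ) ∣ x := fun x => by
    rw [← AddSubgroup.zmultiples_eq_closure, Int.mem_zmultiples_iff, Int.natAbs_dvd]
  refine ⟨g.natAbs, fun hg => hn ?_, hmem⟩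
  simpa [hg] using (hmem n).mp hnK

noncomputable def intBox (a d f : ℕ) : Finset (ℤ × ℤ × ℤ) :=
  Ico 0 (a : ℤ) ×ˢ Ico 0 (d : ℤ) ×ˢ Ico 0 (f : ℤ)

theorem mem_intBox {a d f : ℕ} {r : ℤ × ℤ × ℤ} :
    r ∈ intBox a d f ↔
      (0 ≤ r.1 ∧ r.1 < a) ∧ (0 ≤ r.2.1 ∧ r.2.1 < d) ∧ (0 ≤ r.2.2 ∧ r.2.2 < f) := by
  simp only [intBox, mem_product, mem_Ico]

theorem card_intBox (a d f : ℕ) : #(intBox a d f) = a * d * f := by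
  simp [intBox, mul_assoc]

/-- The row lattice of the upper triangular matrix `[[a, b, c], [0, d, e], [0, 0, f]]`. -/
def triangularLattice (a d f : ℕ) (b c e : ℤ) : AddSubgroup (ℤ × ℤ × ℤ) where
  carrier := {u | ∃ x y z : ℤ, u = (x * a, x * b + y * d, x * c + y * e + z * f)}
  zero_mem' := ⟨0, 0, 0, by simp only [zero_mul, add_zero]; rfl⟩
  add_mem' := by
    rintro _ _ ⟨x, y, z, rfl⟩ ⟨x', y', z', rfl⟩
    exact ⟨x + x', y + y', z + z', by simp only [Prod.mk_add_mk]; ring_nf⟩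
  neg_mem' := by
    rintro _ ⟨x, y, z, rfl⟩
    exact ⟨-x, -y, -z, by simp only [Prod.neg_mk]; ring_nf⟩

theorem rows_mem_triangularLattice (a d f : ℕ) (b c e : ℤ) :
    ((a : ℤ), b, c) ∈ triangularLattice a d f b c e ∧
      ((0 : ℤ), (d : ℤ), e) ∈ triangularLattice a d f b c e ∧
      ((0 : ℤ), (0 : ℤ), (f : ℤ)) ∈ triangularLattice a d f b c e :=
  ⟨⟨1, 0, 0, by simp⟩, ⟨0, 1, 0, by simp⟩, ⟨0, 0, 1, by simp⟩⟩

section triangularLattice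

variable {a d f : ℕ} {b c e : ℤ}

theorem mem_triangularLattice {u : ℤ × ℤ × ℤ} :
    u ∈ triangularLattice a d f b c e ↔
      ∃ x y z : ℤ, u = (x * a, x * b + y * d, x * c + y * e + z * f) :=
  Iff.rfl

theorem triangularLattice_le_iff {H : AddSubgroup (ℤ × ℤ × ℤ)} :
    triangularLattice a d f b c e ≤ H ↔ (↑a, b, c) ∈ H ∧ (0, ↑d, e) ∈ H ∧ (0, 0, ↑f) ∈ H := by
  refine ⟨fun h => ?_, ?_⟩
  · obtain ⟨h₁, h₂, h₃⟩ := rows_mem_triangularLattice a d f b c e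
    exact ⟨h h₁, h h₂, h h₃⟩
  · rintro ⟨h₁, h₂, h₃⟩ _ ⟨x, y, z, rfl⟩
    have hsum : ((x * a, x * b + y * d, x * c + y * e + z * f) : ℤ × ℤ × ℤ) =
        x • ((a : ℤ), b, c) + y • ((0 : ℤ), (d : ℤ), e) + z • ((0 : ℤ), (0 : ℤ), (f : ℤ)) := by
      simp only [Prod.smul_mk, smul_eq_mul, Prod.mk_add_mk]
      ring_nf
    rw [hsum]
    exact H.add_mem (H.add_mem (H.zsmul_mem h₁ x) (H.zsmul_mem h₂ y)) (H.zsmul_mem h₃ z)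

theorem dvd_fst_of_mem_triangularLattice {u : ℤ × ℤ × ℤ}
    (hu : u ∈ triangularLattice a d f b c e) : (a : ℤ) ∣ u.1 := by
  obtain ⟨x, y, z, rfl⟩ := hu
  exact dvd_mul_left _ _

theorem dvd_of_zero_mem_triangularLattice (ha : a ≠ 0) {v w : ℤ}
    (h : (0, v, w) ∈ triangularLattice a d f b c e) : (d : ℤ) ∣ v := by
  obtain ⟨x, y, z, hxyz⟩ := h
  simp only [Prod.mk.injEq] at hxyz
  obtain ⟨hx, hv, -⟩ := hxyz
  obtain rfl : x = 0 := by simpa [ha] using hx.symm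
  simp [hv]

theorem dvd_of_zero_zero_mem_triangularLattice (ha : a ≠ 0) (hd : d ≠ 0) {w : ℤ}
    (h : (0, 0, w) ∈ triangularLattice a d f b c e) : (f : ℤ) ∣ w := by
  obtain ⟨x, y, z, hxyz⟩ := h
  simp only [Prod.mk.injEq] at hxyz
  obtain ⟨hx, hy, hw⟩ := hxyz
  obtain rfl : x = 0 := by simpa [ha] using hx.symm
  obtain rfl : y = 0 := by simpa [hd] using hy.symm
  simp [hw]

theorem eq_of_sub_mem_triangularLattice (ha : a ≠ 0) (hd : d ≠ 0) {r r' : ℤ × ℤ × ℤ}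
    (hr : r ∈ intBox a d f) (hr' : r' ∈ intBox a d f)
    (h : r - r' ∈ triangularLattice a d f b c e) : r = r' := by
  obtain ⟨r₁, r₂, r₃⟩ := r
  obtain ⟨r₁', r₂', r₃'⟩ := r'
  simp only [mem_intBox] at hr hr'
  simp only [Prod.mk_sub_mk] at h
  obtain rfl : r₁ = r₁' := eq_of_dvd_sub_of_nonneg_of_lt hr.1.1 hr.1.2 hr'.1.1 hr'.1.2
    (dvd_fst_of_mem_triangularLattice h)
  rw [sub_self] at h
  obtain rfl : r₂ = r₂' := eq_of_dvd_sub_of_nonneg_of_lt hr.2.1.1 hr.2.1.2 hr'.2.1.1 hr'.2.1.2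
    (dvd_of_zero_mem_triangularLattice ha h)
  rw [sub_self] at h
  obtain rfl : r₃ = r₃' := eq_of_dvd_sub_of_nonneg_of_lt hr.2.2.1 hr.2.2.2 hr'.2.2.1 hr'.2.2.2
    (dvd_of_zero_zero_mem_triangularLattice ha hd h)
  rfl

theorem exists_mem_intBox_sub_mem_triangularLattice (ha : a ≠ 0) (hd : d ≠ 0) (hf : f ≠ 0)
    (u : ℤ × ℤ × ℤ) : ∃ r ∈ intBox a d f, u - r ∈ triangularLattice a d f b c e := by
  obtain ⟨u₁, u₂, u₃⟩ := u
  set x := u₁ / a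
  set y := (u₂ - x * b) / d
  set z := (u₃ - x * c - y * e) / f
  refine ⟨(u₁ % a, (u₂ - x * b) % d, (u₃ - x * c - y * e) % f), ?_, x, y, z, ?_⟩
  · simp only [mem_intBox]
    refine ⟨⟨?_, ?_⟩, ⟨?_, ?_⟩, ⟨?_, ?_⟩⟩ <;>
      first | exact Int.emod_nonneg _ (by positivity) | exact Int.emod_lt_of_pos _ (by positivity)
  · simp only [Prod.mk_sub_mk, Int.emod_def, x, y, z]
    ring_nf

theorem index_triangularLattice (ha : a ≠ 0) (hd : d ≠ 0) (hf : f ≠ 0) :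
    (triangularLattice a d f b c e).index = a * d * f := by
  set L := triangularLattice a d f b c e
  have hbij : Function.Bijective fun r : intBox a d f => ((r : ℤ × ℤ × ℤ) : (ℤ × ℤ × ℤ) ⧸ L) := by
    refine ⟨fun r r' h => Subtype.ext ?_, fun q => ?_⟩
    · exact eq_of_sub_mem_triangularLattice ha hd r.2 r'.2 (QuotientAddGroup.eq_iff_sub_mem.mp h)
    · induction q using QuotientAddGroup.induction_on with | H u => ?_
      obtain ⟨r, hr, hur⟩ := exists_mem_intBox_sub_mem_triangularLattice ha hd hf u
      exact ⟨⟨r, hr⟩, (QuotientAddGroup.eq_iff_sub_mem.mpr hur).symm⟩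
  rw [AddSubgroup.index, ← Nat.card_eq_of_bijective _ hbij, Nat.card_eq_finsetCard, card_intBox]

theorem triangularLattice_rowOps (k l m : ℤ) :
    triangularLattice a d f (b - k * d) (c - k * e - l * f) (e - m * f) =
      triangularLattice a d f b c e := by
  ext u
  simp only [mem_triangularLattice]
  constructor
  · rintro ⟨x, y, z, rfl⟩
    exact ⟨x, y - x * k, z - x * l - y * m, by ring_nf⟩
  · rintro ⟨x, y, z, rfl⟩
    exact ⟨x, y + x * k, z + x * l + (y + x * k) * m, by ring_nf⟩

theorem exists_mem_intBox_triangularLattice_eq (hd : d ≠ 0) (hf : f ≠ 0) :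
    ∃ r ∈ intBox d f f,
      triangularLattice a d f r.1 r.2.1 r.2.2 = triangularLattice a d f b c e := by
  refine ⟨(b % d, (c - b / d * e) % f, e % f), ?_, ?_⟩
  · simp only [mem_intBox]
    refine ⟨⟨?_, ?_⟩, ⟨?_, ?_⟩, ⟨?_, ?_⟩⟩ <;>
      first | exact Int.emod_nonneg _ (by positivity) | exact Int.emod_lt_of_pos _ (by positivity)
  · convert triangularLattice_rowOps (a := a) (b / d) ((c - b / d * e) / f) (e / f) using 2 <;>
      simp only [Int.emod_def] <;> ring

theorem diag_eq_of_triangularLattice_eq {a' d' f' : ℕ} {b' c' e' : ℤ}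
    (ha : a ≠ 0) (hd : d ≠ 0) (ha' : a' ≠ 0) (hd' : d' ≠ 0)
    (h : triangularLattice a d f b c e = triangularLattice a' d' f' b' c' e') :
    a = a' ∧ d = d' ∧ f = f' := by
  obtain ⟨hr₁, hr₂, hr₃⟩ := triangularLattice_le_iff.mp h.le
  obtain ⟨hr₁', hr₂', hr₃'⟩ := triangularLattice_le_iff.mp h.ge
  refine ⟨Nat.dvd_antisymm ?_ ?_, Nat.dvd_antisymm ?_ ?_, Nat.dvd_antisymm ?_ ?_⟩ <;>
    apply Int.natCast_dvd_natCast.mp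
  exacts [dvd_fst_of_mem_triangularLattice hr₁', dvd_fst_of_mem_triangularLattice hr₁,
    dvd_of_zero_mem_triangularLattice ha hr₂', dvd_of_zero_mem_triangularLattice ha' hr₂,
    dvd_of_zero_zero_mem_triangularLattice ha hd hr₃',
    dvd_of_zero_zero_mem_triangularLattice ha' hd' hr₃]

/-- Off-diagonal entries are compared through differences of rows, which are points of a box. -/
theorem eq_of_triangularLattice_eq {r r' : ℤ × ℤ × ℤ} (ha : a ≠ 0) (hd : d ≠ 0)
    (hr : r ∈ intBox d f f) (hr' : r' ∈ intBox d f f)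
    (h : triangularLattice a d f r.1 r.2.1 r.2.2 = triangularLattice a d f r'.1 r'.2.1 r'.2.2) :
    r = r' := by
  obtain ⟨b, c, e⟩ := r
  obtain ⟨b', c', e'⟩ := r'
  set L := triangularLattice a d f b c e
  simp only [mem_intBox] at hr hr'
  have mem_box : ∀ {v w : ℤ}, (0 ≤ v ∧ v < d) → (0 ≤ w ∧ w < f) → (0, v, w) ∈ intBox a d f :=
    fun hv hw => mem_intBox.mpr ⟨⟨le_rfl, by positivity⟩, hv, hw⟩
  have hd₀ : (0 : ℤ) < d := by positivity
  obtain ⟨hr₁, hr₂, -⟩ := rows_mem_triangularLattice a d f b c e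
  obtain ⟨hr₁', hr₂', -⟩ := h ▸ rows_mem_triangularLattice a d f b' c' e'
  have hbc : ((0 : ℤ), b', c') = (0, b, c) :=
    eq_of_sub_mem_triangularLattice ha hd (mem_box hr'.1 hr'.2.1) (mem_box hr.1 hr.2.1)
      (by simpa using L.sub_mem hr₁' hr₁)
  have he : ((0 : ℤ), (0 : ℤ), e') = (0, 0, e) :=
    eq_of_sub_mem_triangularLattice ha hd (mem_box ⟨le_rfl, hd₀⟩ hr'.2.2)
      (mem_box ⟨le_rfl, hd₀⟩ hr.2.2) (by simpa using L.sub_mem hr₂' hr₂)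
  simp only [Prod.mk.injEq, true_and] at hbc he
  rw [hbc.1, hbc.2, he]

theorem isLieSubring_triangularLattice_iff (ha : a ≠ 0) (hd : d ≠ 0) :
    IsLieSubring (triangularLattice a d f b c e) ↔ f ∣ a * d := by
  constructor
  · intro h
    obtain ⟨hr₁, hr₂, -⟩ := rows_mem_triangularLattice a d f b c e
    have hbr := dvd_of_zero_zero_mem_triangularLattice ha hd (h _ hr₁ _ hr₂)
    exact_mod_cast (by simpa [heisenbergBracket] using hbr : (f : ℤ) ∣ a * d)
  · rintro ⟨k, hk⟩ _ ⟨x, y, z, rfl⟩ _ ⟨x', y', z', rfl⟩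
    refine ⟨0, 0, (x * y' - x' * y) * k, ?_⟩
    simp only [heisenbergBracket, Prod.mk.injEq]
    refine ⟨by ring, by ring, ?_⟩
    have hk' : (a : ℤ) * d = f * k := by exact_mod_cast hk
    linear_combination (x * y' - x' * y) * hk'

end triangularLattice

theorem exists_eq_triangularLattice (H : AddSubgroup (ℤ × ℤ × ℤ)) (hH : H.index ≠ 0) :
    ∃ a d f : ℕ, a ≠ 0 ∧ d ≠ 0 ∧ f ≠ 0 ∧ ∃ b c e : ℤ, H = triangularLattice a d f b c e := by
  have hn : (H.index : ℤ) ≠ 0 := by exact_mod_cast hH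
  obtain ⟨a, ha, hK₁⟩ := (H.map (AddMonoidHom.fst ℤ (ℤ × ℤ))).exists_ne_zero_forall_mem_iff_dvd hn
    ⟨_, H.nsmul_index_mem (1, 0, 0), by simp⟩
  obtain ⟨d, hd, hK₂⟩ := ((H.comap (AddMonoidHom.inr ℤ (ℤ × ℤ))).map
    (AddMonoidHom.fst ℤ ℤ)).exists_ne_zero_forall_mem_iff_dvd hn
    ⟨_, by simpa using H.nsmul_index_mem (0, 1, 0), rfl⟩
  obtain ⟨f, hf, hK₃⟩ := (H.comap ((AddMonoidHom.inr ℤ (ℤ × ℤ)).comp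
    (AddMonoidHom.inr ℤ ℤ))).exists_ne_zero_forall_mem_iff_dvd hn
    (by simpa using H.nsmul_index_mem (0, 0, 1))
  obtain ⟨⟨_, b, c⟩, hg₁, rfl⟩ := (hK₁ a).mpr dvd_rfl
  obtain ⟨⟨_, e⟩, hg₂, rfl⟩ := (hK₂ d).mpr dvd_rfl
  have hg₃ : ((0 : ℤ), (0 : ℤ), (f : ℤ)) ∈ H := (hK₃ f).mpr dvd_rfl
  refine ⟨a, d, f, ha, hd, hf, b, c, e,
    le_antisymm ?_ (triangularLattice_le_iff.mpr ⟨hg₁, hg₂, hg₃⟩)⟩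
  rintro ⟨u₁, u₂, u₃⟩ hu
  obtain ⟨x, hx⟩ := (hK₁ u₁).mp ⟨_, hu, rfl⟩
  have hu₂ : ((0 : ℤ), u₂ - x * b, u₃ - x * c) ∈ H := by
    convert H.sub_mem hu (H.zsmul_mem hg₁ x) using 1
    simp [hx, mul_comm]
  obtain ⟨y, hy⟩ := (hK₂ (u₂ - x * b)).mp ⟨_, hu₂, rfl⟩
  have hu₃ : ((0 : ℤ), (0 : ℤ), u₃ - x * c - y * e) ∈ H := by
    convert H.sub_mem hu₂ (H.zsmul_mem hg₂ y) using 1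
    simp only [AddMonoidHom.inr_apply, Prod.smul_mk, smul_eq_mul, mul_zero, Prod.mk_sub_mk,
      sub_self, Prod.mk.injEq, true_and, and_true]
    linarith
  obtain ⟨z, hz⟩ := (hK₃ _).mp hu₃
  exact ⟨x, y, z, by simp only [Prod.mk.injEq]; refine ⟨?_, ?_, ?_⟩ <;> linarith⟩

theorem exists_mem_intBox_eq_triangularLattice (H : AddSubgroup (ℤ × ℤ × ℤ))
    (hH : H.index ≠ 0) :
    ∃ a d f : ℕ, a ≠ 0 ∧ d ≠ 0 ∧ f ≠ 0 ∧
      ∃ r ∈ intBox d f f, H = triangularLattice a d f r.1 r.2.1 r.2.2 := by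
  obtain ⟨a, d, f, ha, hd, hf, b, c, e, rfl⟩ := exists_eq_triangularLattice H hH
  obtain ⟨r, hr, hL⟩ :=
    exists_mem_intBox_triangularLattice_eq (a := a) (b := b) (c := c) (e := e) hd hf
  exact ⟨a, d, f, ha, hd, hf, r, hr, hL.symm⟩

theorem exists_mem_antidiagonalTuple_of_mul_eq_prime_pow {p N a d f : ℕ} (hp : p.Prime)
    (h : a * d * f = p ^ N) :
    ∃ m ∈ Finset.Nat.antidiagonalTuple 3 N, a = p ^ m 0 ∧ d = p ^ m 1 ∧ f = p ^ m 2 := by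
  have hdvd : ∀ n, n ∣ a * d * f → ∃ i, n = p ^ i := fun n hn =>
    let ⟨i, _, hi⟩ := (Nat.dvd_prime_pow hp).mp (h ▸ hn); ⟨i, hi⟩
  obtain ⟨i, rfl⟩ := hdvd a (dvd_mul_of_dvd_left (dvd_mul_right a d) f)
  obtain ⟨j, rfl⟩ := hdvd d (dvd_mul_of_dvd_left (dvd_mul_left d _) f)
  obtain ⟨k, rfl⟩ := hdvd f (dvd_mul_left f _)
  refine ⟨![i, j, k], ?_, rfl, rfl, rfl⟩
  rw [Finset.Nat.mem_antidiagonalTuple, Fin.sum_univ_three]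
  exact Nat.pow_right_injective hp.two_le (by simpa [pow_add] using h)

/-- The Hermite normal forms of the Lie subrings of index `p ^ N`: `⟨m, (b, c, e)⟩` stands for
the diagonal `(p ^ m 0, p ^ m 1, p ^ m 2)` with off-diagonal entries `b, c, e`. -/
noncomputable def primePowerHNF (p N : ℕ) : Finset (Σ _ : Fin 3 → ℕ, ℤ × ℤ × ℤ) :=
  ((Finset.Nat.antidiagonalTuple 3 N).filter fun m => m 2 ≤ m 0 + m 1).sigma
    fun m => intBox (p ^ m 1) (p ^ m 2) (p ^ m 2)

def primePowerLattice (p : ℕ) (t : Σ _ : Fin 3 → ℕ, ℤ × ℤ × ℤ) : AddSubgroup (ℤ × ℤ × ℤ) :=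
  triangularLattice (p ^ t.1 0) (p ^ t.1 1) (p ^ t.1 2) t.2.1 t.2.2.1 t.2.2.2

theorem setOf_isLieSubring_index_eq_prime_pow {p : ℕ} (hp : p.Prime) (N : ℕ) :
    {H | IsLieSubring H ∧ H.index = p ^ N} = primePowerLattice p '' primePowerHNF p N := by
  have hpow : ∀ k, p ^ k ≠ 0 := fun k => pow_ne_zero k hp.ne_zero
  ext H
  constructor
  · rintro ⟨hLie, hindex⟩
    obtain ⟨a, d, f, ha, hd, hf, r, hr, rfl⟩ :=
      exists_mem_intBox_eq_triangularLattice H (hindex ▸ hpow N)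
    rw [index_triangularLattice ha hd hf] at hindex
    obtain ⟨m, hm, rfl, rfl, rfl⟩ := exists_mem_antidiagonalTuple_of_mul_eq_prime_pow hp hindex
    rw [isLieSubring_triangularLattice_iff ha hd, ← pow_add,
      Nat.pow_dvd_pow_iff_le_right hp.one_lt] at hLie
    exact ⟨⟨m, r⟩, mem_sigma.mpr ⟨mem_filter.mpr ⟨hm, hLie⟩, hr⟩, rfl⟩
  · rintro ⟨⟨m, r⟩, ht, rfl⟩
    obtain ⟨hm, hle⟩ := mem_filter.mp (mem_sigma.mp ht).1
    rw [Finset.Nat.mem_antidiagonalTuple, Fin.sum_univ_three] at hm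
    refine ⟨(isLieSubring_triangularLattice_iff (hpow _) (hpow _)).mpr ?_, ?_⟩
    · rw [← pow_add]
      exact pow_dvd_pow p hle
    · rw [primePowerLattice, index_triangularLattice (hpow _) (hpow _) (hpow _), ← pow_add,
        ← pow_add, hm]

theorem injOn_primePowerLattice {p : ℕ} (hp : p.Prime) (N : ℕ) :
    Set.InjOn (primePowerLattice p) (primePowerHNF p N) := by
  have hpow : ∀ k, p ^ k ≠ 0 := fun k => pow_ne_zero k hp.ne_zero
  rintro ⟨m, r⟩ ht ⟨m', r'⟩ ht' h
  obtain ⟨h₀, h₁, h₂⟩ := diag_eq_of_triangularLattice_eq (hpow _) (hpow _) (hpow _) (hpow _) h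
  obtain rfl : m = m' := by
    funext i
    fin_cases i <;> apply Nat.pow_right_injective hp.two_le <;> assumption
  obtain rfl : r = r' :=
    eq_of_triangularLattice_eq (hpow _) (hpow _) (mem_sigma.mp ht).2 (mem_sigma.mp ht').2 h
  rfl

/-- For the Heisenberg Lie ring `L` over `ℤ` and any prime `p`, the number of Lie subrings of
`L` of additive index `p^N` is finite and equals `∑ p^{m₂ + 2m₃}`, the sum running over all
triples `(m₁,m₂,m₃)` of non-negative integers with `m₁ + m₂ + m₃ = N` and `m₃ ≤ m₁ + m₂`.
(Equivalently, `ζ_{L,p}(s) = ζ_p(s)ζ_p(s-1)ζ_p(2s-2)ζ_p(2s-3)ζ_p(3s-3)⁻¹`.) -/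
theorem heisenberg_subring_count
    (p : ℕ) (hp : p.Prime) (N : ℕ) :
    {H : AddSubgroup (ℤ × ℤ × ℤ) |
        (∀ u ∈ H, ∀ v ∈ H, heisenbergBracket u v ∈ H) ∧ H.index = p ^ N}.Finite ∧
      Nat.card {H : AddSubgroup (ℤ × ℤ × ℤ) //
          (∀ u ∈ H, ∀ v ∈ H, heisenbergBracket u v ∈ H) ∧ H.index = p ^ N} =
        ∑ m ∈ (Finset.Nat.antidiagonalTuple 3 N).filter (fun m => m 2 ≤ m 0 + m 1),
          p ^ (m 1 + 2 * m 2) := by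
  have hS := setOf_isLieSubring_index_eq_prime_pow hp N
  refine ⟨hS ▸ (primePowerHNF p N).finite_toSet.image _, ?_⟩
  calc Nat.card {H // IsLieSubring H ∧ H.index = p ^ N}
      = (primePowerLattice p '' primePowerHNF p N).ncard := by
        rw [← hS]; exact Nat.card_coe_set_eq _
    _ = #(primePowerHNF p N) := by
        rw [(injOn_primePowerLattice hp N).ncard_image, Set.ncard_coe_finset]
    _ = _ := by
        rw [primePowerHNF, card_sigma]
        refine sum_congr rfl fun m _ => ?_
        rw [card_intBox, ← pow_add, ← pow_add]
        ring_nf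
end

section
/- Let L be the Heisenberg Lie ring over ℤ and let p be a prime. For every N ≥ 0, the number of Lie ideals of L of additive index p^N is finite and equals ∑ p^{b + 2c}, where the sum runs over all triples (a, b, c) of non-negative integers with a + b + 3c = N. (Equivalently, the ideal zeta function satisfies ζ^◁_{L,p}(s) = 1/((1−p^{−s})(1−p^{1−s})(1−p^{2−3s})) for all primes p, whence ζ^◁_L(s) = ζ(s)ζ(s−1)ζ(3s−2).) -/
open Finset

/-!
Every subgroup of finite index of `ℤ³` is spanned by the rows of a unique upper triangular
matrix `!![A, s, t; 0, B, u; 0, 0, C]` in Hermite normal form (`A, B, C > 0`, `0 ≤ s < B`,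
`0 ≤ t, u < C`), and its index is `A * B * C`. All brackets lie in `ℤz` and are spanned by
those of `x, y` with the rows, `s z`, `-A z` and `B z`; so such a lattice is an ideal iff `C`
divides `A`, `B` and `s`. For index
`p ^ N` this forces `A = p ^ (a + c)`, `B = p ^ (b + c)`, `C = p ^ c` and `s = p ^ c * s'` with
`a + b + 3c = N`, leaving `p ^ b` choices for `s'` and `p ^ c` each for `t` and `u`.
-/

theorem Int.exists_addSubgroup_eq_zmultiples_natCast (K : AddSubgroup ℤ) :
    ∃ n : ℕ, K = AddSubgroup.zmultiples (n : ℤ) := by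
  obtain ⟨a, rfl⟩ := Int.subgroup_cyclic K
  exact ⟨a.natAbs, by rw [Int.zmultiples_natAbs, AddSubgroup.zmultiples_eq_closure]⟩

/-- The row lattice of `!![A, s, t; 0, B, u; 0, 0, C]`. -/
def hermiteLattice (A B C : ℕ) (s t u : ℤ) : AddSubgroup (ℤ × ℤ × ℤ) where
  carrier := {w | ∃ m n k : ℤ, w = (m * A, m * s + n * B, m * t + n * u + k * C)}
  zero_mem' := ⟨0, 0, 0, by simp [Prod.zero_eq_mk]⟩
  add_mem' := by
    rintro _ _ ⟨m, n, k, rfl⟩ ⟨m', n', k', rfl⟩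
    exact ⟨m + m', n + n', k + k', by ext <;> simp <;> ring⟩
  neg_mem' := by
    rintro _ ⟨m, n, k, rfl⟩
    exact ⟨-m, -n, -k, by ext <;> simp <;> ring⟩

structure IsHermiteNormal (A B C : ℕ) (s t u : ℤ) : Prop where
  A_pos : 0 < A
  s_nonneg : 0 ≤ s
  s_lt : s < B
  t_nonneg : 0 ≤ t
  t_lt : t < C
  u_nonneg : 0 ≤ u
  u_lt : u < C

namespace IsHermiteNormal

variable {A B C : ℕ} {s t u : ℤ}

theorem B_pos (h : IsHermiteNormal A B C s t u) : 0 < B := by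
  have := h.s_nonneg.trans_lt h.s_lt
  omega

theorem C_pos (h : IsHermiteNormal A B C s t u) : 0 < C := by
  have := h.t_nonneg.trans_lt h.t_lt
  omega

end IsHermiteNormal

namespace hermiteLattice

variable {A B C A' B' C' : ℕ} {s t u s' t' u' : ℤ} {w : ℤ × ℤ × ℤ}

theorem row₁_mem : ((A : ℤ), s, t) ∈ hermiteLattice A B C s t u := ⟨1, 0, 0, by simp⟩

theorem row₂_mem : ((0 : ℤ), (B : ℤ), u) ∈ hermiteLattice A B C s t u := ⟨0, 1, 0, by simp⟩

theorem row₃_mem : ((0 : ℤ), (0 : ℤ), (C : ℤ)) ∈ hermiteLattice A B C s t u := ⟨0, 0, 1, by simp⟩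

theorem dvd_fst (hw : w ∈ hermiteLattice A B C s t u) : (A : ℤ) ∣ w.1 := by
  obtain ⟨m, n, k, rfl⟩ := hw
  exact dvd_mul_left _ _

theorem dvd_snd_fst (hA : A ≠ 0) (hw : w ∈ hermiteLattice A B C s t u) (h₁ : w.1 = 0) :
    (B : ℤ) ∣ w.2.1 := by
  obtain ⟨m, n, k, rfl⟩ := hw
  obtain rfl : m = 0 := by simpa [hA] using h₁
  simp

theorem dvd_snd_snd (hA : A ≠ 0) (hB : B ≠ 0) (hw : w ∈ hermiteLattice A B C s t u)
    (h₁ : w.1 = 0) (h₂ : w.2.1 = 0) : (C : ℤ) ∣ w.2.2 := by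
  obtain ⟨m, n, k, rfl⟩ := hw
  obtain rfl : m = 0 := by simpa [hA] using h₁
  obtain rfl : n = 0 := by simpa [hB] using h₂
  simp

theorem mk_zero_zero_mem_iff (hA : A ≠ 0) (hB : B ≠ 0) {z : ℤ} :
    ((0 : ℤ), (0 : ℤ), z) ∈ hermiteLattice A B C s t u ↔ (C : ℤ) ∣ z := by
  refine ⟨fun hz => dvd_snd_snd hA hB hz rfl rfl, ?_⟩
  rintro ⟨k, rfl⟩
  exact ⟨0, 0, k, by simp [mul_comm]⟩

theorem eq_zero_of_abs_lt (hw : w ∈ hermiteLattice A B C s t u) (h₁ : |w.1| < A)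
    (h₂ : |w.2.1| < B) (h₃ : |w.2.2| < C) : w = 0 := by
  have hA : A ≠ 0 := by
    have := (abs_nonneg w.1).trans_lt h₁
    omega
  have hB : B ≠ 0 := by
    have := (abs_nonneg w.2.1).trans_lt h₂
    omega
  have e₁ : w.1 = 0 := Int.eq_zero_of_abs_lt_dvd (dvd_fst hw) h₁
  have e₂ : w.2.1 = 0 := Int.eq_zero_of_abs_lt_dvd (dvd_snd_fst hA hw e₁) h₂
  have e₃ : w.2.2 = 0 := Int.eq_zero_of_abs_lt_dvd (dvd_snd_snd hA hB hw e₁ e₂) h₃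
  exact Prod.ext e₁ (Prod.ext e₂ e₃)

noncomputable def box (A B C : ℕ) : Finset (ℤ × ℤ × ℤ) :=
  Ico 0 (A : ℤ) ×ˢ Ico 0 (B : ℤ) ×ˢ Ico 0 (C : ℤ)

theorem card_box : (box A B C).card = A * B * C := by
  simp [box, mul_assoc]

theorem exists_mem_box_sub_mem (hA : 0 < A) (hB : 0 < B) (hC : 0 < C) (w : ℤ × ℤ × ℤ) :
    ∃ b ∈ box A B C, w - b ∈ hermiteLattice A B C s t u := by
  obtain ⟨x, y, z⟩ := w
  set m := x / A
  set n := (y - m * s) / B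
  set k := (z - m * t - n * u) / C
  refine ⟨(x % A, (y - m * s) % B, (z - m * t - n * u) % C), ?_, m, n, k, ?_⟩
  · simp only [box, mem_product, mem_Ico]
    refine ⟨⟨?_, ?_⟩, ⟨?_, ?_⟩, ⟨?_, ?_⟩⟩ <;>
      first | exact Int.emod_nonneg _ (by positivity) | exact Int.emod_lt_of_pos _ (by positivity)
  · ext <;> simp [Int.emod_def, m, n, k] <;> ring

theorem eq_of_sub_mem_of_mem_box {b b' : ℤ × ℤ × ℤ} (hb : b ∈ box A B C) (hb' : b' ∈ box A B C)
    (h : b - b' ∈ hermiteLattice A B C s t u) : b = b' := by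
  simp only [box, mem_product, mem_Ico] at hb hb'
  refine sub_eq_zero.mp (eq_zero_of_abs_lt h ?_ ?_ ?_)
  · exact abs_sub_lt_of_nonneg_of_lt hb.1.1 hb.1.2 hb'.1.1 hb'.1.2
  · exact abs_sub_lt_of_nonneg_of_lt hb.2.1.1 hb.2.1.2 hb'.2.1.1 hb'.2.1.2
  · exact abs_sub_lt_of_nonneg_of_lt hb.2.2.1 hb.2.2.2 hb'.2.2.1 hb'.2.2.2

theorem index_eq (hA : 0 < A) (hB : 0 < B) (hC : 0 < C) :
    (hermiteLattice A B C s t u).index = A * B * C := by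
  let toQuotient : ↥(box A B C : Set (ℤ × ℤ × ℤ)) → (ℤ × ℤ × ℤ) ⧸ hermiteLattice A B C s t u :=
    fun b => (b : ℤ × ℤ × ℤ)
  have hbij : Function.Bijective toQuotient := by
    constructor
    · rintro ⟨b, hb⟩ ⟨b', hb'⟩ h
      refine Subtype.ext (eq_of_sub_mem_of_mem_box (s := s) (t := t) (u := u) hb hb' ?_)
      rw [← neg_mem_iff, neg_sub, sub_eq_neg_add]
      exact QuotientAddGroup.eq.mp h
    · rintro ⟨w⟩
      obtain ⟨b, hb, hwb⟩ := exists_mem_box_sub_mem (s := s) (t := t) (u := u) hA hB hC w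
      exact ⟨⟨b, hb⟩, QuotientAddGroup.eq.mpr (by rwa [neg_add_eq_sub])⟩
  rw [AddSubgroup.index_eq_card, ← Nat.card_eq_of_bijective toQuotient hbij, Nat.card_coe_set_eq,
    Set.ncard_coe_finset, card_box]

theorem dvd_of_le (hA : A ≠ 0) (hB : B ≠ 0)
    (hle : hermiteLattice A' B' C' s' t' u' ≤ hermiteLattice A B C s t u) :
    A ∣ A' ∧ B ∣ B' ∧ C ∣ C' :=
  ⟨Int.natCast_dvd_natCast.mp (dvd_fst (hle row₁_mem)),
    Int.natCast_dvd_natCast.mp (dvd_snd_fst hA (hle row₂_mem) rfl),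
    Int.natCast_dvd_natCast.mp (dvd_snd_snd hA hB (hle row₃_mem) rfl rfl)⟩

end hermiteLattice

theorem IsHermiteNormal.eq_of_hermiteLattice_eq {A B C A' B' C' : ℕ} {s t u s' t' u' : ℤ}
    (h : IsHermiteNormal A B C s t u) (h' : IsHermiteNormal A' B' C' s' t' u')
    (hL : hermiteLattice A B C s t u = hermiteLattice A' B' C' s' t' u') :
    A = A' ∧ B = B' ∧ C = C' ∧ s = s' ∧ t = t' ∧ u = u' := by
  open hermiteLattice in
  obtain ⟨hA, hB, hC⟩ := dvd_of_le h.A_pos.ne' h.B_pos.ne' hL.ge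
  obtain ⟨hA', hB', hC'⟩ := dvd_of_le h'.A_pos.ne' h'.B_pos.ne' hL.le
  obtain rfl := Nat.dvd_antisymm hA hA'
  obtain rfl := Nat.dvd_antisymm hB hB'
  obtain rfl := Nat.dvd_antisymm hC hC'
  have hst : ((0 : ℤ), s, t) = (0, s', t') := by
    refine eq_of_sub_mem_of_mem_box (A := A) (B := B) (C := C) (s := s) (t := t) (u := u) ?_ ?_ ?_
    · simp [hermiteLattice.box, h.A_pos, h.s_nonneg, h.s_lt, h.t_nonneg, h.t_lt]
    · simp [hermiteLattice.box, h.A_pos, h'.s_nonneg, h'.s_lt, h'.t_nonneg, h'.t_lt]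
    · have : ((A : ℤ), s', t') ∈ hermiteLattice A B C s t u := hL ▸ row₁_mem
      simpa using sub_mem row₁_mem this
  have hu : ((0 : ℤ), (0 : ℤ), u) = (0, 0, u') := by
    refine eq_of_sub_mem_of_mem_box (A := A) (B := B) (C := C) (s := s) (t := t) (u := u) ?_ ?_ ?_
    · simp [hermiteLattice.box, h.A_pos, h.B_pos, h.u_nonneg, h.u_lt]
    · simp [hermiteLattice.box, h.A_pos, h.B_pos, h'.u_nonneg, h'.u_lt]
    · have : ((0 : ℤ), (B : ℤ), u') ∈ hermiteLattice A B C s t u := hL ▸ row₂_mem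
      simpa using sub_mem row₂_mem this
  simp_all

theorem eq_hermiteLattice_of_forall_dvd {H : AddSubgroup (ℤ × ℤ × ℤ)} {A B C : ℕ} {s t u : ℤ}
    (h₁ : ((A : ℤ), s, t) ∈ H) (h₂ : ((0 : ℤ), (B : ℤ), u) ∈ H)
    (h₃ : ((0 : ℤ), (0 : ℤ), (C : ℤ)) ∈ H)
    (hA : ∀ w ∈ H, (A : ℤ) ∣ w.1) (hB : ∀ w ∈ H, w.1 = 0 → (B : ℤ) ∣ w.2.1)
    (hC : ∀ w ∈ H, w.1 = 0 → w.2.1 = 0 → (C : ℤ) ∣ w.2.2) :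
    H = hermiteLattice A B C s t u := by
  refine le_antisymm (fun w hw => ?_) ?_
  · obtain ⟨m, hm⟩ := hA w hw
    have hw₂ := sub_mem hw (zsmul_mem h₁ m)
    obtain ⟨n, hn⟩ := hB _ hw₂ (by simp [hm, mul_comm])
    have hw₃ := sub_mem hw₂ (zsmul_mem h₂ n)
    obtain ⟨k, hk⟩ := hC _ hw₃ (by simp [hm, mul_comm]) (by
      simp only [Prod.smul_mk, Int.zsmul_eq_mul, Prod.snd_sub, Prod.fst_sub, mul_zero] at hn ⊢
      linarith)
    refine ⟨m, n, k, ?_⟩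
    simp only [Prod.smul_mk, Int.zsmul_eq_mul, Prod.snd_sub, Prod.fst_sub, mul_zero] at hn hk
    ext <;> simp <;> linarith
  · rintro _ ⟨m, n, k, rfl⟩
    convert add_mem (add_mem (zsmul_mem h₁ m) (zsmul_mem h₂ n)) (zsmul_mem h₃ k) using 1
    ext <;> simp

theorem exists_isHermiteNormal_rows_mem {H : AddSubgroup (ℤ × ℤ × ℤ)} {A B C : ℕ}
    {s₀ t₀ u₀ : ℤ} (hA : 0 < A) (hB : 0 < B) (hC : 0 < C)
    (h₁ : ((A : ℤ), s₀, t₀) ∈ H) (h₂ : ((0 : ℤ), (B : ℤ), u₀) ∈ H)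
    (h₃ : ((0 : ℤ), (0 : ℤ), (C : ℤ)) ∈ H) :
    ∃ s t u, IsHermiteNormal A B C s t u ∧ ((A : ℤ), s, t) ∈ H ∧ ((0 : ℤ), (B : ℤ), u) ∈ H := by
  set u := u₀ % C
  have h₂' : ((0 : ℤ), (B : ℤ), u) ∈ H := by
    convert sub_mem h₂ (zsmul_mem h₃ (u₀ / C)) using 1
    ext <;> simp [u, Int.emod_def, mul_comm]
  set t₁ := t₀ - s₀ / B * u
  have h₁' : ((A : ℤ), s₀ % B, t₁) ∈ H := by
    convert sub_mem h₁ (zsmul_mem h₂' (s₀ / B)) using 1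
    ext <;> simp [Int.emod_def, t₁, mul_comm]
  have h₁'' : ((A : ℤ), s₀ % B, t₁ % C) ∈ H := by
    convert sub_mem h₁' (zsmul_mem h₃ (t₁ / C)) using 1
    ext <;> simp [Int.emod_def, mul_comm]
  have hB' : (0 : ℤ) < B := by positivity
  have hC' : (0 : ℤ) < C := by positivity
  exact ⟨_, _, _, ⟨hA, Int.emod_nonneg _ hB'.ne', Int.emod_lt_of_pos _ hB',
    Int.emod_nonneg _ hC'.ne', Int.emod_lt_of_pos _ hC', Int.emod_nonneg _ hC'.ne',
    Int.emod_lt_of_pos _ hC'⟩, h₁'', h₂'⟩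

theorem exists_hermiteLattice_eq {H : AddSubgroup (ℤ × ℤ × ℤ)} (hH : H.index ≠ 0) :
    ∃ A B C s t u, IsHermiteNormal A B C s t u ∧ H = hermiteLattice A B C s t u := by
  -- `A`, `B`, `C` generate the first coordinates of `H`, the second coordinates of
  -- `H ∩ (0 × ℤ × ℤ)` and the third coordinates of `H ∩ (0 × 0 × ℤ)`.
  obtain ⟨A, hA⟩ := Int.exists_addSubgroup_eq_zmultiples_natCast
    (H.map (AddMonoidHom.fst ℤ (ℤ × ℤ)))
  obtain ⟨B, hB⟩ := Int.exists_addSubgroup_eq_zmultiples_natCast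
    ((H.comap (AddMonoidHom.inr ℤ (ℤ × ℤ))).map (AddMonoidHom.fst ℤ ℤ))
  obtain ⟨C, hC⟩ := Int.exists_addSubgroup_eq_zmultiples_natCast
    (H.comap ((AddMonoidHom.inr ℤ (ℤ × ℤ)).comp (AddMonoidHom.inr ℤ ℤ)))
  have memA : ∀ x : ℤ, (∃ y z, (x, y, z) ∈ H) ↔ (A : ℤ) ∣ x := fun x => by
    rw [← Int.mem_zmultiples_iff, ← hA]
    simp
  have memB : ∀ y : ℤ, (∃ z, ((0 : ℤ), y, z) ∈ H) ↔ (B : ℤ) ∣ y := fun y => by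
    rw [← Int.mem_zmultiples_iff, ← hB]
    simp
  have memC : ∀ z : ℤ, ((0 : ℤ), (0 : ℤ), z) ∈ H ↔ (C : ℤ) ∣ z := fun z => by
    rw [← Int.mem_zmultiples_iff, ← hC]
    simp
  have hidx : ∀ e : ℤ × ℤ × ℤ, (H.index : ℤ) • e ∈ H := fun e => by
    simpa using H.nsmul_index_mem e
  have hpos : ∀ {D : ℕ}, (D : ℤ) ∣ H.index → 0 < D := fun h =>
    Nat.pos_of_ne_zero fun hD => hH (by simpa [hD] using h)
  have hA₀ : 0 < A := hpos ((memA _).mp ⟨0, 0, by simpa using hidx (1, 0, 0)⟩)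
  have hB₀ : 0 < B := hpos ((memB _).mp ⟨0, by simpa using hidx (0, 1, 0)⟩)
  have hC₀ : 0 < C := hpos ((memC _).mp (by simpa using hidx (0, 0, 1)))
  obtain ⟨s₀, t₀, h₁⟩ := (memA A).mpr dvd_rfl
  obtain ⟨u₀, h₂⟩ := (memB B).mpr dvd_rfl
  have h₃ := (memC C).mpr dvd_rfl
  obtain ⟨s, t, u, hnf, h₁', h₂'⟩ := exists_isHermiteNormal_rows_mem hA₀ hB₀ hC₀ h₁ h₂ h₃
  refine ⟨A, B, C, s, t, u, hnf, eq_hermiteLattice_of_forall_dvd h₁' h₂' h₃ ?_ ?_ ?_⟩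
  · exact fun w hw => (memA _).mp ⟨_, _, hw⟩
  · rintro ⟨x, y, z⟩ hw rfl
    exact (memB _).mp ⟨_, hw⟩
  · rintro ⟨x, y, z⟩ hw rfl rfl
    exact (memC _).mp hw

def IsHeisenbergIdeal (H : AddSubgroup (ℤ × ℤ × ℤ)) : Prop :=
  ∀ u : ℤ × ℤ × ℤ, ∀ v ∈ H, heisenbergBracket u v ∈ H

theorem isHeisenbergIdeal_hermiteLattice_iff {A B C : ℕ} {s t u : ℤ} (hA : A ≠ 0) (hB : B ≠ 0) :
    IsHeisenbergIdeal (hermiteLattice A B C s t u) ↔ C ∣ A ∧ C ∣ B ∧ (C : ℤ) ∣ s := by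
  simp only [IsHeisenbergIdeal, heisenbergBracket, hermiteLattice.mk_zero_zero_mem_iff hA hB,
    ← Int.natCast_dvd_natCast]
  constructor
  · intro h
    refine ⟨?_, ?_, ?_⟩
    · simpa using h (0, 1, 0) _ hermiteLattice.row₁_mem
    · simpa using h (1, 0, 0) _ hermiteLattice.row₂_mem
    · simpa using h (1, 0, 0) _ hermiteLattice.row₁_mem
  · rintro ⟨hCA, hCB, hCs⟩ v _ ⟨m, n, k, rfl⟩
    exact dvd_sub (((hCs.mul_left m).add (hCB.mul_left n)).mul_left v.1)
      ((hCA.mul_left m).mul_right v.2.1)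

def idealParams (p N : ℕ) : Finset (Σ _ : ℕ × ℕ × ℕ, ℕ × ℕ × ℕ) :=
  ((range (N + 1) ×ˢ range (N + 1) ×ˢ range (N + 1)).filter
      fun t => t.1 + t.2.1 + 3 * t.2.2 = N).sigma
    fun t => range (p ^ t.2.1) ×ˢ range (p ^ t.2.2) ×ˢ range (p ^ t.2.2)

def idealOfParams (p : ℕ) : (Σ _ : ℕ × ℕ × ℕ, ℕ × ℕ × ℕ) → AddSubgroup (ℤ × ℤ × ℤ)
  | ⟨(a, b, c), (s, t, u)⟩ =>
    hermiteLattice (p ^ (a + c)) (p ^ (b + c)) (p ^ c) ((p ^ c * s : ℕ) : ℤ) t u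

section idealParams

variable {p N : ℕ}

theorem card_idealParams :
    (idealParams p N).card =
      ∑ t ∈ (range (N + 1) ×ˢ range (N + 1) ×ˢ range (N + 1)).filter
          (fun t => t.1 + t.2.1 + 3 * t.2.2 = N), p ^ (t.2.1 + 2 * t.2.2) := by
  rw [idealParams, card_sigma]
  refine sum_congr rfl fun t _ => ?_
  simp only [card_product, card_range]
  ring

theorem isHermiteNormal_of_mem_idealParams (hp : 0 < p) {a b c s t u : ℕ}
    (hx : ⟨(a, b, c), (s, t, u)⟩ ∈ idealParams p N) :
    IsHermiteNormal (p ^ (a + c)) (p ^ (b + c)) (p ^ c) ((p ^ c * s : ℕ) : ℤ) t u := by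
  simp only [idealParams, mem_sigma, mem_product, mem_range] at hx
  obtain ⟨-, hs, ht, hu⟩ := hx
  refine ⟨by positivity, by positivity, ?_, by positivity, by exact_mod_cast ht, by positivity,
    by exact_mod_cast hu⟩
  rw [pow_add, mul_comm (p ^ b)]
  exact_mod_cast Nat.mul_lt_mul_of_pos_left hs (by positivity)

theorem isHeisenbergIdeal_idealOfParams (hp : 0 < p) {x : Σ _ : ℕ × ℕ × ℕ, ℕ × ℕ × ℕ}
    (hx : x ∈ idealParams p N) : IsHeisenbergIdeal (idealOfParams p x) := by
  obtain ⟨⟨a, b, c⟩, s, t, u⟩ := x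
  have hnf := isHermiteNormal_of_mem_idealParams hp hx
  refine (isHeisenbergIdeal_hermiteLattice_iff hnf.A_pos.ne' hnf.B_pos.ne').mpr
    ⟨pow_dvd_pow p (by omega), pow_dvd_pow p (by omega), ?_⟩
  push_cast
  exact dvd_mul_right _ _

theorem index_idealOfParams (hp : 0 < p) {x : Σ _ : ℕ × ℕ × ℕ, ℕ × ℕ × ℕ}
    (hx : x ∈ idealParams p N) : (idealOfParams p x).index = p ^ N := by
  obtain ⟨⟨a, b, c⟩, s, t, u⟩ := x
  have hnf := isHermiteNormal_of_mem_idealParams hp hx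
  simp only [idealParams, mem_sigma, mem_filter] at hx
  rw [idealOfParams, hermiteLattice.index_eq hnf.A_pos hnf.B_pos hnf.C_pos, ← pow_add, ← pow_add]
  congr 1
  omega

theorem injOn_idealOfParams (hp : 1 < p) : Set.InjOn (idealOfParams p) (idealParams p N) := by
  rintro ⟨⟨a, b, c⟩, s, t, u⟩ hx ⟨⟨a', b', c'⟩, s', t', u'⟩ hx' h
  obtain ⟨hA, hB, hC, hs, ht, hu⟩ :=
    (isHermiteNormal_of_mem_idealParams (by omega) hx).eq_of_hermiteLattice_eq
      (isHermiteNormal_of_mem_idealParams (by omega) hx') h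
  obtain rfl : c = c' := Nat.pow_right_injective hp hC
  obtain rfl : a = a' := by
    have := Nat.pow_right_injective hp hA
    omega
  obtain rfl : b = b' := by
    have := Nat.pow_right_injective hp hB
    omega
  obtain rfl : s = s' :=
    mul_left_cancel₀ (by positivity) (by exact_mod_cast hs : p ^ c * s = p ^ c * s')
  obtain rfl : t = t' := by exact_mod_cast ht
  obtain rfl : u = u' := by exact_mod_cast hu
  rfl

theorem exists_idealOfParams_eq (hp : p.Prime) {H : AddSubgroup (ℤ × ℤ × ℤ)}
    (hH : IsHeisenbergIdeal H) (hidx : H.index = p ^ N) :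
    ∃ x ∈ idealParams p N, idealOfParams p x = H := by
  have hp₀ := hp.pos
  obtain ⟨A, B, C, s, t, u, hnf, rfl⟩ := exists_hermiteLattice_eq (hidx ▸ pow_ne_zero N hp.ne_zero)
  rw [hermiteLattice.index_eq hnf.A_pos hnf.B_pos hnf.C_pos] at hidx
  obtain ⟨hCA, hCB, s', rfl⟩ :=
    (isHeisenbergIdeal_hermiteLattice_iff hnf.A_pos.ne' hnf.B_pos.ne').mp hH
  have hA : A ∣ p ^ N := hidx ▸ (dvd_mul_right A B).mul_right C
  have hB : B ∣ p ^ N := hidx ▸ (dvd_mul_left B A).mul_right C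
  have hC : C ∣ p ^ N := hidx ▸ dvd_mul_left C (A * B)
  obtain ⟨α, -, rfl⟩ := (Nat.dvd_prime_pow hp).mp hA
  obtain ⟨β, -, rfl⟩ := (Nat.dvd_prime_pow hp).mp hB
  obtain ⟨γ, -, rfl⟩ := (Nat.dvd_prime_pow hp).mp hC
  have hγα : γ ≤ α := (Nat.pow_dvd_pow_iff_le_right hp.one_lt).mp hCA
  have hγβ : γ ≤ β := (Nat.pow_dvd_pow_iff_le_right hp.one_lt).mp hCB
  have hN : α + β + γ = N := Nat.pow_right_injective hp.two_le (by simpa [pow_add] using hidx)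
  lift s' to ℕ using nonneg_of_mul_nonneg_right hnf.s_nonneg (by positivity)
  lift t to ℕ using hnf.t_nonneg
  lift u to ℕ using hnf.u_nonneg
  have hs' : s' < p ^ (β - γ) := by
    have := hnf.s_lt
    rw [← Nat.sub_add_cancel hγβ, pow_add, mul_comm] at this
    exact lt_of_mul_lt_mul_right (by exact_mod_cast this) (Nat.zero_le _)
  refine ⟨⟨(α - γ, β - γ, γ), (s', t, u)⟩, ?_, ?_⟩
  · simp only [idealParams, mem_sigma, mem_filter, mem_product, mem_range]
    exact ⟨⟨⟨by omega, by omega, by omega⟩, by omega⟩, hs', by exact_mod_cast hnf.t_lt,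
      by exact_mod_cast hnf.u_lt⟩
  · simp only [idealOfParams, Nat.sub_add_cancel hγα, Nat.sub_add_cancel hγβ]
    push_cast
    rfl

end idealParams

/-- For the Heisenberg Lie ring `L` over `ℤ` and any prime `p`, the number of Lie ideals of
`L` of additive index `p^N` is finite and equals `∑ p^{b + 2c}`, the sum running over all
triples `(a,b,c)` of non-negative integers with `a + b + 3c = N`. (Equivalently,
`ζ^◁_{L,p}(s) = 1/((1-p^{-s})(1-p^{1-s})(1-p^{2-3s}))`, whence
`ζ^◁_L(s) = ζ(s)ζ(s-1)ζ(3s-2)`.) -/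
theorem heisenberg_ideal_count
    (p : ℕ) (hp : p.Prime) (N : ℕ) :
    {H : AddSubgroup (ℤ × ℤ × ℤ) |
        (∀ u : ℤ × ℤ × ℤ, ∀ v ∈ H, heisenbergBracket u v ∈ H) ∧ H.index = p ^ N}.Finite ∧
      Nat.card {H : AddSubgroup (ℤ × ℤ × ℤ) //
          (∀ u : ℤ × ℤ × ℤ, ∀ v ∈ H, heisenbergBracket u v ∈ H) ∧ H.index = p ^ N} =
        ∑ t ∈ (Finset.range (N + 1) ×ˢ Finset.range (N + 1) ×ˢ Finset.range (N + 1)).filter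
            (fun t => t.1 + t.2.1 + 3 * t.2.2 = N),
          p ^ (t.2.1 + 2 * t.2.2) := by
  have himage :
      {H | IsHeisenbergIdeal H ∧ H.index = p ^ N} = idealOfParams p '' idealParams p N := by
    ext H
    constructor
    · rintro ⟨hH, hidx⟩
      exact exists_idealOfParams_eq hp hH hidx
    · rintro ⟨x, hx, rfl⟩
      exact ⟨isHeisenbergIdeal_idealOfParams hp.pos hx, index_idealOfParams hp.pos hx⟩
  refine ⟨himage ▸ (idealParams p N).finite_toSet.image _, ?_⟩
  rw [← card_idealParams, ← Set.ncard_coe_finset, ← (injOn_idealOfParams hp.one_lt).ncard_image,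
    ← himage, ← Nat.card_coe_set_eq]
  rfl
end
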